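/- arXiv:2509.00392 — 7 statements merged into one kernel-verified Lean document; each statement's English description precedes it below -/
import Mathlib

section
/- Let Γ be a finite unsigned GKM₃ graph. Then any two edges of Γ with a common initial vertex belong to a common 2-face of Γ. -/
attribute [local instance] Classical.propDecidable

/-- A graph with directed edges `E`, vertices `V`, edge reversal, and a
(combinatorial) connection `conn`, where `conn e e'` is the transport of an
edge `e'` with `ini e' = ini e` along the edge `e`. -/
structure ConnGraph (V : Type*) (E : Type*) where
  ini : E → V
  ter : E → V
  rev : E → E
  rev_ini : ∀ e, ini (rev e) = ter e
  rev_ter : ∀ e, ter (rev e) = ini e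
  rev_rev : ∀ e, rev (rev e) = e
  conn : E → E → E
  conn_ini : ∀ e e', ini e' = ini e → ini (conn e e') = ter e
  conn_self : ∀ e, conn e e = rev e
  conn_inv : ∀ e e', ini e' = ini e → conn (rev e) (conn e e') = e'

namespace ConnGraph

variable {V E : Type*} (G : ConnGraph V E)

/-- One step of adjacency along an edge. -/
def Step (a b : V) : Prop := ∃ e : E, G.ini e = a ∧ G.ter e = b

/-- The graph is connected. -/
def Connected : Prop := ∀ a b : V, Relation.ReflTransGen G.Step a b

/-- The graph is `n`-valent: every star has exactly `n` edges. -/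
def NValent (n : ℕ) : Prop := ∀ v : V, {e : E | G.ini e = v}.ncard = n

/-- A sign function on a graph with connection: `ε e e'` plays the role of
`⟨ε(e), e'⟩` for `e'` in the star of `ini e`. -/
def IsSignFunction (ε : E → E → ℤ) : Prop :=
  (∀ e e' : E, G.ini e' = G.ini e → ε e e' = 1 ∨ ε e e' = -1) ∧
  (∀ e : E, ε e e = 1) ∧
  (∀ e e' : E, G.ini e' = G.ini e → ε (G.rev e) (G.conn e e') = ε e e')

/-- An invariant function (relative to a sign function): `c e e'` plays the
role of `⟨c(e), e'⟩`. -/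
def IsInvariantFunction (ε c : E → E → ℤ) : Prop :=
  (∀ e : E, c e e = -2) ∧
  (∀ e e' : E, G.ini e' = G.ini e →
    c e e' = ε (G.rev e) (G.conn e e') * c (G.rev e) (G.conn e e'))

/-- A label function: an element of the group `L(Γ)`. -/
def IsLabelFunction (ε c : E → E → ℤ) (a : E → ℤ) : Prop :=
  ∀ e e' : E, G.ini e' = G.ini e →
    a (G.conn e e') = ε e e' * a e' + c e e' * a e

/-- `x : E → ℤ` represents an element of `ℤ star(v)`:
it is supported on the star of `v`. -/
def StarSupported (v : V) (x : E → ℤ) : Prop := ∀ e : E, G.ini e ≠ v → x e = 0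

/-- An element of the group of axial functions `A(Γ)`: a tuple `(f v)_{v ∈ V}`
with `f v ∈ ℤ star(v)`, satisfying `f (t e) = φ_e (f (i e))` for every edge. -/
def IsAxialTuple (ε c : E → E → ℤ) (f : V → E → ℤ) : Prop :=
  (∀ v : V, G.StarSupported v (f v)) ∧
  (∀ e e' : E, G.ini e' = G.ini e →
    f (G.ter e) (G.conn e e') = ε e e' * f (G.ini e) e' + f (G.ini e) e * c e e')

/-- The map `φ_e : ℤ star(i e) → ℤ star(t e)`,
`φ_e(x) = ∇_e (ε(e)·x + ⟨x, e⟩·c(e))`. -/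
noncomputable def phi (ε c : E → E → ℤ) (e : E) (x : E → ℤ) : E → ℤ := fun e'' =>
  if G.ini e'' = G.ter e then
    ε e (G.conn (G.rev e) e'') * x (G.conn (G.rev e) e'') +
      x e * c e (G.conn (G.rev e) e'')
  else 0

/-- `φ_γ` for an edge path `γ = (e₁, …, e_q)`: the composite
`φ_{e_q} ∘ ⋯ ∘ φ_{e₁}`. -/
noncomputable def phiList (ε c : E → E → ℤ) : List E → (E → ℤ) → (E → ℤ)
  | [], x => x
  | e :: l, x => phiList ε c l (G.phi ε c e x)

/-- The parallel transport (monodromy) operator `Π_γ = ∇_{e_q} ∘ ⋯ ∘ ∇_{e₁}`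
along an edge path, on edges. -/
def transportList : List E → E → E
  | [], x => x
  | e :: l, x => transportList l (G.conn e x)

/-- `IsPath u w l`: the list of edges `l` is an edge path from `u` to `w`. -/
def IsPath : V → V → List E → Prop
  | u, w, [] => u = w
  | u, w, e :: l => G.ini e = u ∧ IsPath (G.ter e) w l

/-- Elementary homotopy of edge paths: deletion of a backtrack `(e, ē)`. -/
inductive HomotopyStep : List E → List E → Prop
  | backtrack (l₁ l₂ : List E) (e : E) :
      HomotopyStep (l₁ ++ e :: G.rev e :: l₂) (l₁ ++ l₂)

/-- Homotopy of edge paths: the equivalence relation generated by insertion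
and deletion of backtracks. -/
def Homotopic : List E → List E → Prop := Relation.EqvGen G.HomotopyStep

/-- A 2-face: a nonempty connected 2-valent subgraph (given by its set of
edges, closed under reversal) which is invariant under the connection. -/
def IsTwoFace (F : Set E) : Prop :=
  F.Nonempty ∧
  (∀ e ∈ F, G.rev e ∈ F) ∧
  (∀ e ∈ F, {e' : E | e' ∈ F ∧ G.ini e' = G.ini e}.ncard = 2) ∧
  (∀ e ∈ F, ∀ e' ∈ F, G.ini e' = G.ini e → G.conn e e' ∈ F) ∧
  (∀ e ∈ F, ∀ e' ∈ F, ∃ l : List E,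
    (∀ x ∈ l, x ∈ F) ∧ G.IsPath (G.ini e) (G.ini e') l)

/-- `f` is a boundary cycle of the 2-face `F`, based at `w`: a closed edge
path at `w` traversing each geometric edge of `F` exactly once. -/
def IsFaceBoundary (F : Set E) (w : V) (f : List E) : Prop :=
  G.IsTwoFace F ∧ f ≠ [] ∧ G.IsPath w w f ∧ (∀ e ∈ f, e ∈ F) ∧
  f.Nodup ∧ (∀ e ∈ f, G.rev e ∉ f) ∧ (∀ e ∈ F, e ∈ f ∨ G.rev e ∈ f)

/-- A conjugated 2-face at the base vertex `v`: a loop of the form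
`g · f · g⁻¹` where `g` is an edge path from `v` and `f` is a boundary cycle
of a 2-face based at the endpoint of `g`. -/
def ConjFaceLoop (v : V) (l : List E) : Prop :=
  ∃ (w : V) (g f : List E) (F : Set E),
    G.IsPath v w g ∧ G.IsFaceBoundary F w f ∧
    l = g ++ f ++ (g.reverse.map G.rev)

/-- The conjugated 2-faces generate the fundamental group (the edge-path
group): every closed edge path is homotopic to a concatenation of conjugated
2-face loops. -/
def FacesGeneratePi1 : Prop :=
  ∀ (v : V) (l : List E), G.IsPath v v l →
    ∃ ls : List (List E), (∀ m ∈ ls, G.ConjFaceLoop v m) ∧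
      G.Homotopic l ls.flatten

end ConnGraph

/-- `(G, lab)` is an abstract unsigned GKM graph, where `lab` is a chosen lift
`α̃ : E → ℤ^k` of the unsigned axial function `α : E → ℤ^k/±1`. -/
structure IsUnsignedGKM {V E : Type*} (G : ConnGraph V E) {k : ℕ}
    (lab : E → Fin k → ℤ) : Prop where
  connected : G.Connected
  lab_ne : ∀ e : E, lab e ≠ 0
  lab_rev : ∀ e : E, lab (G.rev e) = -lab e
  indep₂ : ∀ e e' : E, G.ini e' = G.ini e → e ≠ e' →
    LinearIndependent ℚ ![(fun j => (lab e j : ℚ)), (fun j => (lab e' j : ℚ))]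
  congru : ∀ e e' : E, G.ini e' = G.ini e →
    ∃ s m : ℤ, (s = 1 ∨ s = -1) ∧ lab (G.conn e e') = s • lab e' + m • lab e

/-- The GKM₃ condition: any three labels at a common vertex are linearly
independent over `ℚ`. -/
def IsGKM3 {V E : Type*} (G : ConnGraph V E) {k : ℕ} (lab : E → Fin k → ℤ) : Prop :=
  ∀ e₁ e₂ e₃ : E, G.ini e₂ = G.ini e₁ → G.ini e₃ = G.ini e₁ →
    e₁ ≠ e₂ → e₁ ≠ e₃ → e₂ ≠ e₃ →
    LinearIndependent ℚ
      ![(fun j => (lab e₁ j : ℚ)), (fun j => (lab e₂ j : ℚ)),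
        (fun j => (lab e₃ j : ℚ))]

/-- `(ε, c)` are the sign and integer data associated to the lift `lab` of the
axial function, via the congruence relation
`α̃(∇_e e') = ⟨ε(e),e'⟩·α̃(e') + ⟨c(e),e'⟩·α̃(e)`, normalized by
`⟨ε(e),e⟩ = 1` and `⟨c(e),e⟩ = -2`. -/
def IsCompatibleData {V E : Type*} (G : ConnGraph V E) {k : ℕ}
    (lab : E → Fin k → ℤ) (ε c : E → E → ℤ) : Prop :=
  (∀ e e' : E, G.ini e' = G.ini e → ε e e' = 1 ∨ ε e e' = -1) ∧
  (∀ e : E, ε e e = 1) ∧ (∀ e : E, c e e = -2) ∧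
  (∀ e e' : E, G.ini e' = G.ini e →
    lab (G.conn e e') = ε e e' • lab e' + c e e' • lab e)

/-- The axial function is almost effective: the `ℤ`-span of its image has
finite index in `ℤ^k`. -/
def AlmostEffective {E : Type*} {k : ℕ} (lab : E → Fin k → ℤ) : Prop :=
  (Submodule.span ℤ (Set.range lab)).toAddSubgroup.index ≠ 0

/-- The axial function is effective: the `ℤ`-span of its image is all
of `ℤ^k`. -/
def Effective {E : Type*} {k : ℕ} (lab : E → Fin k → ℤ) : Prop :=
  Submodule.span ℤ (Set.range lab) = ⊤

/-!
Walk around a putative 2-face: a corner `(a, b)` (two edges at a vertex) is carried along `a`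
to the corner `(∇_a b, ā)`. Starting from `(e, e')`, the congruence relation keeps every label
met in the plane spanned over `ℚ` by `α(e)` and `α(e')`. By GKM₃ at most two edges at a vertex
have labels in a plane, so at every vertex reached exactly the two edges of the current corner
are met, and the edges of the orbit form a 2-valent, connection-invariant, connected subgraph.
-/

@[elab_as_elim]
theorem Equiv.Perm.SameCycle.induction_on {α : Type*} {f : Equiv.Perm α} {P : α → Prop}
    {x y : α} (h : f.SameCycle x y) (hx : P x)
    (hf : ∀ z, f.SameCycle x z → P z → P (f z))
    (hf_symm : ∀ z, f.SameCycle x z → P z → P (f.symm z)) : P y := by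
  obtain ⟨i, rfl⟩ := h
  induction i using Int.induction_on with
  | zero => simpa using hx
  | succ i ih =>
    rw [add_comm, zpow_one_add, Equiv.Perm.mul_apply]
    exact hf _ ⟨i, Eq.refl _⟩ ih
  | pred i ih =>
    rw [sub_eq_neg_add, zpow_add, zpow_neg_one, Equiv.Perm.mul_apply, Equiv.Perm.inv_def]
    exact hf_symm _ ⟨-i, Eq.refl _⟩ ih

namespace ConnGraph

variable {V E : Type*} (G : ConnGraph V E)

theorem conn_inj {a b b' : E} (hb : G.ini b = G.ini a) (hb' : G.ini b' = G.ini a) :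
    G.conn a b = G.conn a b' ↔ b = b' := by
  refine ⟨fun h => ?_, congrArg _⟩
  rw [← G.conn_inv a b hb, ← G.conn_inv a b' hb', h]

def AdjIn (F : Set E) (u w : V) : Prop := ∃ x ∈ F, G.ini x = u ∧ G.ter x = w

theorem adjIn_symm {F : Set E} (hF : ∀ x ∈ F, G.rev x ∈ F) {u w : V} (h : G.AdjIn F u w) :
    G.AdjIn F w u := by
  obtain ⟨x, hx, rfl, rfl⟩ := h
  exact ⟨G.rev x, hF x hx, G.rev_ini x, G.rev_ter x⟩

theorem exists_isPath_of_reflTransGen {F : Set E} {u w : V}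
    (h : Relation.ReflTransGen (G.AdjIn F) u w) :
    ∃ l : List E, (∀ x ∈ l, x ∈ F) ∧ G.IsPath u w l := by
  induction h using Relation.ReflTransGen.head_induction_on with
  | refl => exact ⟨[], by simp, rfl⟩
  | head hstep _ ih =>
    obtain ⟨x, hxF, rfl, rfl⟩ := hstep
    obtain ⟨l, hlF, hl⟩ := ih
    exact ⟨x :: l, by simpa [hxF] using hlF, rfl, hl⟩

def Corner : Type _ := {p : E × E // G.ini p.2 = G.ini p.1}

def turn : Equiv.Perm G.Corner where
  toFun s := ⟨(G.conn s.1.1 s.1.2, G.rev s.1.1), by rw [G.rev_ini, G.conn_ini _ _ s.2]⟩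
  invFun s := ⟨(G.rev s.1.2, G.conn s.1.2 s.1.1), by rw [G.conn_ini _ _ s.2.symm, G.rev_ini]⟩
  left_inv s := Subtype.ext (Prod.ext (G.rev_rev _) (G.conn_inv _ _ s.2))
  right_inv s := Subtype.ext (Prod.ext (G.conn_inv _ _ s.2.symm) (G.rev_rev _))

variable {G}

theorem turn_fst (s : G.Corner) : (G.turn s).1.1 = G.conn s.1.1 s.1.2 := rfl

theorem turn_snd (s : G.Corner) : (G.turn s).1.2 = G.rev s.1.1 := rfl

theorem turn_symm_fst (s : G.Corner) : (G.turn.symm s).1.1 = G.rev s.1.2 := rfl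

theorem Corner.ini_eq_of_eq_or_eq {s : G.Corner} {x : E} (hx : x = s.1.1 ∨ x = s.1.2) :
    G.ini x = G.ini s.1.1 := by
  rcases hx with rfl | rfl
  · rfl
  · exact s.2

theorem turn_fst_ne_snd_iff (s : G.Corner) :
    (G.turn s).1.1 ≠ (G.turn s).1.2 ↔ s.1.1 ≠ s.1.2 := by
  rw [turn_fst, turn_snd, ← G.conn_self]
  exact (G.conn_inj s.2 rfl).not.trans ne_comm

theorem Corner.fst_ne_snd_of_sameCycle {s₀ s : G.Corner} (hne : s₀.1.1 ≠ s₀.1.2)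
    (h : G.turn.SameCycle s₀ s) : s.1.1 ≠ s.1.2 :=
  h.induction_on hne (fun z _ hz => (turn_fst_ne_snd_iff z).2 hz)
    (fun z _ hz => (turn_fst_ne_snd_iff _).1 (by rwa [Equiv.apply_symm_apply]))

variable (G) in
def orbitFace (s₀ : G.Corner) : Set E :=
  {x | ∃ s, G.turn.SameCycle s₀ s ∧ (x = s.1.1 ∨ x = s.1.2)}

section orbitFace

variable {s₀ s : G.Corner}

theorem fst_mem_orbitFace (h : G.turn.SameCycle s₀ s) : s.1.1 ∈ G.orbitFace s₀ :=
  ⟨s, h, Or.inl rfl⟩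

theorem snd_mem_orbitFace (h : G.turn.SameCycle s₀ s) : s.1.2 ∈ G.orbitFace s₀ :=
  ⟨s, h, Or.inr rfl⟩

theorem rev_mem_orbitFace {x : E} (hx : x ∈ G.orbitFace s₀) : G.rev x ∈ G.orbitFace s₀ := by
  obtain ⟨s, hs, rfl | rfl⟩ := hx
  · exact snd_mem_orbitFace (s := G.turn s) hs.apply_right
  · exact fst_mem_orbitFace (s := G.turn.symm s) hs.symm_apply_right

theorem reflTransGen_ini_orbitFace (h : G.turn.SameCycle s₀ s) :
    Relation.ReflTransGen (G.AdjIn (G.orbitFace s₀)) (G.ini s₀.1.1) (G.ini s.1.1) := by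
  refine h.induction_on Relation.ReflTransGen.refl (fun z hz ih => ih.tail ?_)
    (fun z hz ih => ih.tail ?_)
  · exact ⟨z.1.1, fst_mem_orbitFace hz, rfl, (G.conn_ini _ _ z.2).symm⟩
  · exact ⟨z.1.2, snd_mem_orbitFace hz, z.2, (G.rev_ini _).symm⟩

theorem isTwoFace_orbitFace (hne : s₀.1.1 ≠ s₀.1.2)
    (hcorner : ∀ s, G.turn.SameCycle s₀ s → ∀ x ∈ G.orbitFace s₀,
      G.ini x = G.ini s.1.1 → x = s.1.1 ∨ x = s.1.2) :
    G.IsTwoFace (G.orbitFace s₀) := by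
  refine ⟨⟨_, fst_mem_orbitFace .rfl⟩, fun x => rev_mem_orbitFace, ?_, ?_, ?_⟩
  · rintro a ⟨s, hs, ha⟩
    have hstar : {x | x ∈ G.orbitFace s₀ ∧ G.ini x = G.ini a} = {s.1.1, s.1.2} := by
      ext x
      refine ⟨fun hx => hcorner s hs x hx.1 (hx.2.trans (Corner.ini_eq_of_eq_or_eq ha)),
        fun hx => ⟨?_, ?_⟩⟩
      · rcases hx with rfl | rfl
        exacts [fst_mem_orbitFace hs, snd_mem_orbitFace hs]
      · rw [Corner.ini_eq_of_eq_or_eq ha, Corner.ini_eq_of_eq_or_eq hx]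
    rw [hstar, Set.ncard_pair (Corner.fst_ne_snd_of_sameCycle hne hs)]
  · rintro a ⟨s, hs, ha⟩ b hb hba
    have hb' := hcorner s hs b hb (hba.trans (Corner.ini_eq_of_eq_or_eq ha))
    rcases ha with rfl | rfl <;> rcases hb' with rfl | rfl
    · rw [G.conn_self]; exact rev_mem_orbitFace (fst_mem_orbitFace hs)
    · exact fst_mem_orbitFace (s := G.turn s) hs.apply_right
    · exact snd_mem_orbitFace (s := G.turn.symm s) hs.symm_apply_right
    · rw [G.conn_self]; exact rev_mem_orbitFace (snd_mem_orbitFace hs)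
  · rintro a ⟨s, hs, ha⟩ b ⟨t, ht, hb⟩
    have hback : Relation.ReflTransGen (G.AdjIn (G.orbitFace s₀)) (G.ini s.1.1) (G.ini s₀.1.1) :=
      Relation.reflTransGen_swap.1 <| Relation.ReflTransGen.mono
        (fun _ _ => G.adjIn_symm fun _ => rev_mem_orbitFace) _ _ (reflTransGen_ini_orbitFace hs)
    have hreach := hback.trans (reflTransGen_ini_orbitFace ht)
    rw [Corner.ini_eq_of_eq_or_eq ha, Corner.ini_eq_of_eq_or_eq hb]
    exact G.exists_isPath_of_reflTransGen hreach

end orbitFace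

end ConnGraph

def labQ {E : Type*} {k : ℕ} (lab : E → Fin k → ℤ) (e : E) : Fin k → ℚ :=
  fun j => (lab e j : ℚ)

section Labels

open ConnGraph

variable {V E : Type*} {G : ConnGraph V E} {k : ℕ} {lab : E → Fin k → ℤ}

namespace IsUnsignedGKM

variable (hGKM : IsUnsignedGKM G lab) {W : Submodule ℚ (Fin k → ℚ)}
include hGKM

theorem labQ_rev (e : E) : labQ lab (G.rev e) = -labQ lab e := by
  funext j
  simp [labQ, hGKM.lab_rev e]

theorem labQ_conn_mem {a b : E} (hab : G.ini b = G.ini a) (ha : labQ lab a ∈ W)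
    (hb : labQ lab b ∈ W) : labQ lab (G.conn a b) ∈ W := by
  obtain ⟨σ, m, -, hσm⟩ := hGKM.congru a b hab
  have hlabQ : labQ lab (G.conn a b) = (σ : ℚ) • labQ lab b + (m : ℚ) • labQ lab a := by
    funext j
    simp [labQ, hσm]
  rw [hlabQ]
  exact W.add_mem (W.smul_mem _ hb) (W.smul_mem _ ha)

theorem labQ_mem_of_sameCycle {s₀ s : G.Corner}
    (h₀ : labQ lab s₀.1.1 ∈ W ∧ labQ lab s₀.1.2 ∈ W) (h : G.turn.SameCycle s₀ s) :
    labQ lab s.1.1 ∈ W ∧ labQ lab s.1.2 ∈ W := by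
  refine h.induction_on h₀ (fun z _ hz => ⟨?_, ?_⟩) (fun z _ hz => ⟨?_, ?_⟩)
  · exact hGKM.labQ_conn_mem z.2 hz.1 hz.2
  · rw [turn_snd, hGKM.labQ_rev]; exact W.neg_mem hz.1
  · rw [turn_symm_fst, hGKM.labQ_rev]; exact W.neg_mem hz.2
  · exact hGKM.labQ_conn_mem z.2.symm hz.2 hz.1

theorem labQ_mem_of_mem_orbitFace {s₀ : G.Corner}
    (h₀ : labQ lab s₀.1.1 ∈ W ∧ labQ lab s₀.1.2 ∈ W) {x : E} (hx : x ∈ G.orbitFace s₀) :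
    labQ lab x ∈ W := by
  obtain ⟨s, hs, rfl | rfl⟩ := hx
  exacts [(hGKM.labQ_mem_of_sameCycle h₀ hs).1, (hGKM.labQ_mem_of_sameCycle h₀ hs).2]

end IsUnsignedGKM

theorem IsGKM3.eq_or_eq_of_labQ_mem (h3 : IsGKM3 G lab) {W : Submodule ℚ (Fin k → ℚ)}
    (hW : Module.finrank ℚ W ≤ 2) {a b x : E} (hb : G.ini b = G.ini a)
    (hx : G.ini x = G.ini a) (hab : a ≠ b) (haW : labQ lab a ∈ W) (hbW : labQ lab b ∈ W)
    (hxW : labQ lab x ∈ W) : x = a ∨ x = b := by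
  by_contra! hxab
  have hspan : Submodule.span ℚ (Set.range ![labQ lab a, labQ lab b, labQ lab x]) ≤ W := by
    rw [Submodule.span_le, Set.range_subset_iff]
    intro i
    fin_cases i
    exacts [haW, hbW, hxW]
  have hrank := (finrank_span_eq_card (h3 a b x hb hx hab hxab.1.symm hxab.2.symm)).symm.trans_le
    (Submodule.finrank_mono hspan)
  rw [Fintype.card_fin] at hrank
  omega

end Labels

theorem twoFace_of_two_edges_general {V E : Type*} {k : ℕ}
    (G : ConnGraph V E) (lab : E → Fin k → ℤ)
    (hGKM : IsUnsignedGKM G lab) (h3 : IsGKM3 G lab) :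
    ∀ e e' : E, G.ini e' = G.ini e → e ≠ e' →
      ∃ F : Set E, G.IsTwoFace F ∧ e ∈ F ∧ e' ∈ F := by
  intro e e' hini hne
  let s₀ : G.Corner := ⟨(e, e'), hini⟩
  let W := Submodule.span ℚ (Set.range ![labQ lab e, labQ lab e'])
  have hW : Module.finrank ℚ W ≤ 2 := (finrank_range_le_card _).trans (by simp)
  have h₀ : labQ lab e ∈ W ∧ labQ lab e' ∈ W :=
    ⟨Submodule.subset_span ⟨0, rfl⟩, Submodule.subset_span ⟨1, rfl⟩⟩
  refine ⟨G.orbitFace s₀, ConnGraph.isTwoFace_orbitFace hne fun s hs x hx hxs => ?_,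
    ConnGraph.fst_mem_orbitFace .rfl, ConnGraph.snd_mem_orbitFace .rfl⟩
  have hsW := hGKM.labQ_mem_of_sameCycle h₀ hs
  exact h3.eq_or_eq_of_labQ_mem hW s.2 hxs (ConnGraph.Corner.fst_ne_snd_of_sameCycle hne hs)
    hsW.1 hsW.2 (hGKM.labQ_mem_of_mem_orbitFace h₀ hx)

/-- In a finite unsigned GKM₃ graph, any two (distinct) edges
with a common initial vertex belong to a common 2-face. -/
theorem twoFace_of_two_edges {V E : Type*} [Fintype V] [Fintype E] {n k : ℕ}
    (G : ConnGraph V E) (lab : E → Fin k → ℤ)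
    (hGKM : IsUnsignedGKM G lab) (hval : G.NValent n) (h3 : IsGKM3 G lab) :
    ∀ e e' : E, G.ini e' = G.ini e → e ≠ e' →
      ∃ F : Set E, G.IsTwoFace F ∧ e ∈ F ∧ e' ∈ F :=
  twoFace_of_two_edges_general G lab hGKM h3
end

section
/- Let Γ be a finite unsigned GKM₃ graph with an acyclic orientation o : E → {±1} of its edges such that b₄(F,o) = 1 holds for every 2-face F of Γ (i.e., every 2-face has a unique vertex of index 2 with respect to the induced orientation). Then the conjugated 2-faces of Γ generate the fundamental group π₁(Γ,v) for any base vertex v. -/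
attribute [local instance] Classical.propDecidable

/-!
Acyclicity of `o` gives every vertex a height that strictly increases along ascending edges;
weigh a loop by the sum over its edges of `(|E| + 1) ^ (height of the higher endpoint)`.
At a peak `x, y` of a loop (`x` ascends into `u`, `y` descends from `u`) either `y = x̄` and
the backtrack is deleted, or `y` and `x̄` span a 2-face (two-valent by GKM₃). There `u` has
index 2, so by `b₄ = 1` it is the top of the face and the rest of the boundary runs strictly
below `u`; replacing `x, y` by that rest, at the cost of a conjugated 2-face, makes the loop
lighter. A loop without a peak descends and then ascends, so a rotation of it has one.
-/

theorem List.exists_adjacent_pos_neg_or_eq_neg_append_pos {α : Type*} (p : α → Prop)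
    (l : List α) :
    (∃ A x y B, l = A ++ x :: y :: B ∧ p x ∧ ¬ p y) ∨
      ∃ D U, l = D ++ U ∧ (∀ e ∈ D, ¬ p e) ∧ ∀ e ∈ U, p e := by
  induction l with
  | nil => exact .inr ⟨[], [], rfl, by simp, by simp⟩
  | cons a l ih =>
    rcases ih with ⟨A, x, y, B, rfl, hx, hy⟩ | ⟨D, U, rfl, hD, hU⟩
    · exact .inl ⟨a :: A, x, y, B, rfl, hx, hy⟩
    by_cases ha : p a
    · rcases D with _ | ⟨d, D⟩
      · exact .inr ⟨[], a :: U, rfl, by simp, by simpa [ha] using hU⟩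
      · exact .inl ⟨[], a, d, D ++ U, rfl, ha, hD d (by simp)⟩
    · exact .inr ⟨a :: D, U, rfl, by simpa [ha] using hD, hU⟩

namespace ConnGraph

variable {V E : Type*}

section Paths

variable (G : ConnGraph V E)

theorem rev_injective : Function.Injective G.rev :=
  Function.LeftInverse.injective G.rev_rev

def revPath (p : List E) : List E := p.reverse.map G.rev

@[simp] theorem revPath_nil : G.revPath [] = [] := rfl

@[simp] theorem revPath_cons (e : E) (p : List E) :
    G.revPath (e :: p) = G.revPath p ++ [G.rev e] := by
  simp [revPath]

@[simp] theorem revPath_append (p q : List E) :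
    G.revPath (p ++ q) = G.revPath q ++ G.revPath p := by
  simp [revPath]

@[simp] theorem revPath_revPath (p : List E) : G.revPath (G.revPath p) = p := by
  induction p with
  | nil => rfl
  | cons e p ih => simp [ih, G.rev_rev]

@[simp] theorem isPath_nil {u w : V} : G.IsPath u w [] ↔ u = w := Iff.rfl

@[simp] theorem isPath_cons {u w : V} {e : E} {p : List E} :
    G.IsPath u w (e :: p) ↔ G.ini e = u ∧ G.IsPath (G.ter e) w p := Iff.rfl

theorem isPath_append_iff {u w : V} {p q : List E} :
    G.IsPath u w (p ++ q) ↔ ∃ z, G.IsPath u z p ∧ G.IsPath z w q := by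
  induction p generalizing u with
  | nil => simp
  | cons e p ih => simp [ih, and_assoc]

section

variable {G}

theorem IsPath.append {u z w : V} {p q : List E} (hp : G.IsPath u z p)
    (hq : G.IsPath z w q) : G.IsPath u w (p ++ q) :=
  G.isPath_append_iff.2 ⟨z, hp, hq⟩

theorem IsPath.revPath {u w : V} {p : List E} (hp : G.IsPath u w p) :
    G.IsPath w u (G.revPath p) := by
  induction p generalizing u with
  | nil => exact hp.symm
  | cons e p ih =>
    rw [revPath_cons]
    exact (ih hp.2).append ⟨G.rev_ini e, by rw [G.rev_ter, hp.1]; rfl⟩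

end

theorem homotopic_backtrack (p q : List E) (e : E) :
    G.Homotopic (p ++ e :: G.rev e :: q) (p ++ q) :=
  .rel _ _ (.backtrack p q e)

section Homotopic

variable {G}

@[refl] theorem Homotopic.refl (p : List E) : G.Homotopic p p := Relation.EqvGen.refl p

@[symm] theorem Homotopic.symm {p q : List E} (h : G.Homotopic p q) : G.Homotopic q p :=
  Relation.EqvGen.symm _ _ h

theorem Homotopic.trans {p q r : List E} (h : G.Homotopic p q)
    (h' : G.Homotopic q r) : G.Homotopic p r :=
  Relation.EqvGen.trans _ _ _ h h'

instance : Trans G.Homotopic G.Homotopic G.Homotopic := ⟨Homotopic.trans⟩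

theorem Homotopic.append_append {p q : List E} (h : G.Homotopic p q) (X Y : List E) :
    G.Homotopic (X ++ p ++ Y) (X ++ q ++ Y) := by
  induction h with
  | rel _ _ hstep =>
    obtain ⟨l₁, l₂, e⟩ := hstep
    simpa using G.homotopic_backtrack (X ++ l₁) (l₂ ++ Y) e
  | refl => rfl
  | symm _ _ _ ih => exact ih.symm
  | trans _ _ _ _ _ ih₁ ih₂ => exact ih₁.trans ih₂

theorem Homotopic.append {p p' q q' : List E} (hp : G.Homotopic p p')
    (hq : G.Homotopic q q') : G.Homotopic (p ++ q) (p' ++ q') := by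
  have h₁ := hp.append_append [] q
  have h₂ := hq.append_append p' []
  simp only [List.nil_append, List.append_nil] at h₁ h₂
  exact h₁.trans h₂

end Homotopic

theorem homotopic_append_revPath (p : List E) : G.Homotopic (p ++ G.revPath p) [] := by
  induction p with
  | nil => rfl
  | cons e p ih =>
    have h := ih.append_append [e] [G.rev e]
    simp only [List.cons_append, revPath_cons, List.nil_append, List.append_nil,
      List.append_assoc] at h ⊢
    exact h.trans (by simpa using G.homotopic_backtrack [] [] e)

theorem homotopic_revPath_append (p : List E) : G.Homotopic (G.revPath p ++ p) [] := by
  simpa using G.homotopic_append_revPath (G.revPath p)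

def FaceGenerated (v : V) (l : List E) : Prop :=
  ∃ ls : List (List E), (∀ m ∈ ls, G.ConjFaceLoop v m) ∧ G.Homotopic l ls.flatten

theorem faceGenerated_nil (v : V) : G.FaceGenerated v [] := ⟨[], by simp, by simp; rfl⟩

section FaceGenerated

variable {G}

theorem FaceGenerated.of_homotopic {v : V} {l l' : List E} (hl' : G.FaceGenerated v l')
    (h : G.Homotopic l l') : G.FaceGenerated v l :=
  let ⟨ls, hls, h'⟩ := hl'
  ⟨ls, hls, h.trans h'⟩

theorem FaceGenerated.conjFaceLoop_append {v : V} {m l : List E} (hm : G.ConjFaceLoop v m)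
    (hl : G.FaceGenerated v l) : G.FaceGenerated v (m ++ l) :=
  let ⟨ls, hls, h⟩ := hl
  ⟨m :: ls, by simpa [hm] using hls, by simpa using (Homotopic.refl m).append h⟩

theorem ConjFaceLoop.conj {u w : V} {g m : List E} (hg : G.IsPath u w g)
    (hm : G.ConjFaceLoop w m) : G.ConjFaceLoop u (g ++ m ++ G.revPath g) := by
  obtain ⟨z, g', f, F, hg', hf, rfl⟩ := hm
  exact ⟨z, g ++ g', f, F, hg.append hg', hf, by simp [revPath]⟩

theorem homotopic_conj_flatten (g : List E) (ls : List (List E)) :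
    G.Homotopic (g ++ ls.flatten ++ G.revPath g)
      (ls.map fun m => g ++ m ++ G.revPath g).flatten := by
  induction ls with
  | nil => simpa using G.homotopic_append_revPath g
  | cons m ls ih =>
    calc g ++ (m :: ls).flatten ++ G.revPath g
        = g ++ m ++ [] ++ (ls.flatten ++ G.revPath g) := by simp
      G.Homotopic _ (g ++ m ++ (G.revPath g ++ g) ++ (ls.flatten ++ G.revPath g)) :=
        (((Homotopic.refl _).append (G.homotopic_revPath_append g)).append
          (Homotopic.refl _)).symm
      _ = (g ++ m ++ G.revPath g) ++ (g ++ ls.flatten ++ G.revPath g) := by simp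
      G.Homotopic _ ((g ++ m ++ G.revPath g) ++ (ls.map fun m => g ++ m ++ G.revPath g).flatten) :=
        (Homotopic.refl _).append ih
      _ = _ := by simp

theorem FaceGenerated.conj {u w : V} {g l : List E} (hg : G.IsPath u w g)
    (hl : G.FaceGenerated w l) : G.FaceGenerated u (g ++ l ++ G.revPath g) := by
  obtain ⟨ls, hls, h⟩ := hl
  refine ⟨ls.map fun m => g ++ m ++ G.revPath g, ?_, ?_⟩
  · simp only [List.mem_map, forall_exists_index, and_imp, forall_apply_eq_imp_iff₂]
    exact fun m hm => (hls m hm).conj hg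
  · exact (h.append_append g (G.revPath g)).trans (homotopic_conj_flatten g ls)

theorem FaceGenerated.of_rotate {y : E} {l : List E} (h : G.FaceGenerated (G.ter y) (l ++ [y])) :
    G.FaceGenerated (G.ini y) (y :: l) := by
  have hhom := (G.homotopic_append_revPath [y]).append_append (y :: l) []
  exact (h.conj (g := [y]) (by simp)).of_homotopic (by simpa using hhom.symm)

end FaceGenerated

end Paths

section Orientation

variable (G : ConnGraph V E) (o : E → ℤ)

def IsAcyclic : Prop :=
  ¬ ∃ (v : V) (l : List E), l ≠ [] ∧ G.IsPath v v l ∧ ∀ e ∈ l, o e = 1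

def UpRel (a b : V) : Prop := ∃ e, o e = 1 ∧ G.ini e = a ∧ G.ter e = b

noncomputable def height (v : V) : ℕ := {u | Relation.TransGen (G.UpRel o) u v}.ncard

noncomputable def index (F : Set E) (v : V) : ℕ :=
  {e | e ∈ F ∧ G.ini e = v ∧ o e = -1}.ncard

variable {G o}

theorem exists_isPath_of_transGen_upRel {a b : V} (h : Relation.TransGen (G.UpRel o) a b) :
    ∃ l : List E, l ≠ [] ∧ G.IsPath a b l ∧ ∀ e ∈ l, o e = 1 := by
  induction h with
  | single hab =>
    obtain ⟨e, he, rfl, rfl⟩ := hab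
    exact ⟨[e], by simp, by simp, by simpa using he⟩
  | tail _ hbc ih =>
    obtain ⟨l, hne, hl, hup⟩ := ih
    obtain ⟨e, he, rfl, rfl⟩ := hbc
    exact ⟨l ++ [e], by simp, hl.append (by simp), by simpa [or_imp, forall_and, he] using hup⟩

theorem IsAcyclic.height_ini_lt_height_ter [Finite V] (hac : G.IsAcyclic o) {e : E}
    (he : o e = 1) : G.height o (G.ini e) < G.height o (G.ter e) := by
  refine Set.ncard_lt_ncard ⟨fun u hu => hu.tail ⟨e, he, rfl, rfl⟩, fun hsub => ?_⟩
  have hcyc : Relation.TransGen (G.UpRel o) (G.ini e) (G.ini e) :=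
    hsub (Relation.TransGen.single ⟨e, he, rfl, rfl⟩)
  exact hac ⟨_, exists_isPath_of_transGen_upRel hcyc⟩

theorem IsAcyclic.ini_ne_ter (hac : G.IsAcyclic o) (ho : ∀ e, o e = 1 ∨ o e = -1)
    (horev : ∀ e, o (G.rev e) = -o e) (e : E) : G.ini e ≠ G.ter e := by
  intro h
  rcases ho e with he | he
  · exact hac ⟨G.ini e, [e], by simp, by simp [h], by simpa using he⟩
  · exact hac ⟨G.ter e, [G.rev e], by simp, by simp [G.rev_ini, G.rev_ter, h],
      by simp [horev, he]⟩

theorem IsAcyclic.exists_up (hac : G.IsAcyclic o) (ho : ∀ e, o e = 1 ∨ o e = -1)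
    (horev : ∀ e, o (G.rev e) = -o e) {v : V} {l : List E} (hne : l ≠ [])
    (hl : G.IsPath v v l) : ∃ e ∈ l, o e = 1 := by
  by_contra! hdown
  refine hac ⟨v, G.revPath l, by simpa [revPath] using hne, hl.revPath, ?_⟩
  simp only [revPath, List.mem_map, List.mem_reverse, forall_exists_index, and_imp,
    forall_apply_eq_imp_iff₂]
  intro e he
  rw [horev, (ho e).resolve_left (hdown e he), neg_neg]

end Orientation

section Weight

variable (G : ConnGraph V E) (o : E → ℤ)

noncomputable def edgeHeight (e : E) : ℕ := max (G.height o (G.ini e)) (G.height o (G.ter e))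

/-- Base `|E| + 1` makes one edge heavier than any `|E|` edges of smaller height. -/
noncomputable def edgeWeight (e : E) : ℕ := (Nat.card E + 1) ^ G.edgeHeight o e

noncomputable def pathWeight (l : List E) : ℕ := (l.map (G.edgeWeight o)).sum

@[simp] theorem pathWeight_nil : G.pathWeight o [] = 0 := rfl

@[simp] theorem pathWeight_cons (e : E) (l : List E) :
    G.pathWeight o (e :: l) = G.edgeWeight o e + G.pathWeight o l := by
  simp [pathWeight]

@[simp] theorem pathWeight_append (p q : List E) :
    G.pathWeight o (p ++ q) = G.pathWeight o p + G.pathWeight o q := by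
  simp [pathWeight]

theorem edgeWeight_pos (e : E) : 0 < G.edgeWeight o e := by
  unfold edgeWeight; positivity

@[simp] theorem edgeWeight_rev (e : E) : G.edgeWeight o (G.rev e) = G.edgeWeight o e := by
  simp [edgeWeight, edgeHeight, G.rev_ini, G.rev_ter, max_comm]

@[simp] theorem pathWeight_revPath (l : List E) :
    G.pathWeight o (G.revPath l) = G.pathWeight o l := by
  induction l with
  | nil => rfl
  | cons e l ih => simp [ih, add_comm]

theorem pow_height_ter_le_edgeWeight (e : E) :
    (Nat.card E + 1) ^ G.height o (G.ter e) ≤ G.edgeWeight o e :=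
  Nat.pow_le_pow_right (Nat.succ_pos _) (le_max_right _ _)

theorem pathWeight_lt_pow {Q : List E} {h : ℕ} (hlen : Q.length ≤ Nat.card E)
    (hQ : ∀ z ∈ Q, G.edgeHeight o z < h) : G.pathWeight o Q < (Nat.card E + 1) ^ h := by
  set B := Nat.card E + 1
  have hterm : ∀ x ∈ Q.map (fun z => G.edgeWeight o z * B), x ≤ B ^ h := by
    simp only [List.mem_map, forall_exists_index, and_imp, forall_apply_eq_imp_iff₂]
    intro z hz
    rw [edgeWeight, ← pow_succ]
    exact Nat.pow_le_pow_right (Nat.succ_pos _) (hQ z hz)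
  have hsum : G.pathWeight o Q * B ≤ Q.length * B ^ h := by
    simpa [pathWeight, List.sum_map_mul_right] using List.sum_le_card_nsmul _ _ hterm
  have hlt : G.pathWeight o Q * B < B ^ h * B := by
    calc G.pathWeight o Q * B ≤ Q.length * B ^ h := hsum
      _ ≤ Nat.card E * B ^ h := Nat.mul_le_mul_right _ hlen
      _ < B ^ h * B := by rw [mul_comm]; exact Nat.mul_lt_mul_of_pos_left (by omega) (by positivity)
  exact Nat.lt_of_mul_lt_mul_right hlt

end Weight

section TwoFace

variable {G : ConnGraph V E} {F : Set E}

theorem IsTwoFace.rev_mem (hF : G.IsTwoFace F) {e : E} (he : e ∈ F) : G.rev e ∈ F :=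
  hF.2.1 e he

theorem IsTwoFace.exists_ne (hF : G.IsTwoFace F) {e : E} (he : e ∈ F) :
    ∃ p ∈ F, G.ini p = G.ini e ∧ p ≠ e := by
  obtain ⟨p, ⟨hp, hpi⟩, hpe⟩ :=
    Set.exists_ne_of_one_lt_ncard (by rw [hF.2.2.1 e he]; omega) e
  exact ⟨p, hp, hpi, hpe⟩

theorem IsTwoFace.eq_or_eq (hF : G.IsTwoFace F) {x y z : E} (hx : x ∈ F) (hy : y ∈ F)
    (hz : z ∈ F) (hyx : G.ini y = G.ini x) (hzx : G.ini z = G.ini x) (hne : x ≠ y) :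
    z = x ∨ z = y := by
  obtain ⟨a, b, -, hab⟩ := Set.ncard_eq_two.1 (hF.2.2.1 x hx)
  have hmem : ∀ c ∈ F, G.ini c = G.ini x → c = a ∨ c = b := fun c hc hci => by
    simpa [hab] using (show c ∈ {e' | e' ∈ F ∧ G.ini e' = G.ini x} from ⟨hc, hci⟩)
  rcases hmem x hx rfl with rfl | rfl <;> rcases hmem y hy hyx with rfl | rfl <;>
    rcases hmem z hz hzx with rfl | rfl <;> simp_all

theorem IsTwoFace.index_eq_two (hF : G.IsTwoFace F) {o : E → ℤ} {d₁ d₂ : E}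
    (h₁ : d₁ ∈ F) (h₂ : d₂ ∈ F) (hini : G.ini d₂ = G.ini d₁) (hne : d₁ ≠ d₂)
    (ho₁ : o d₁ = -1) (ho₂ : o d₂ = -1) : G.index o F (G.ini d₁) = 2 := by
  have hset : {e | e ∈ F ∧ G.ini e = G.ini d₁ ∧ o e = -1} = {d₁, d₂} := by
    ext e
    simp only [Set.mem_ofPred_eq, Set.mem_insert_iff, Set.mem_singleton_iff]
    constructor
    · rintro ⟨he, hei, -⟩
      exact hF.eq_or_eq h₁ h₂ he hini hei hne
    · rintro (rfl | rfl)
      exacts [⟨h₁, rfl, ho₁⟩, ⟨h₂, hini, ho₂⟩]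
  rw [index, hset, Set.ncard_pair hne]

/-- At a vertex of maximal height both edges of the face descend, so it has index 2. -/
theorem IsTwoFace.height_lt_of_ini_ne [Finite V] (hF : G.IsTwoFace F) {o : E → ℤ}
    (hac : G.IsAcyclic o) (ho : ∀ e, o e = 1 ∨ o e = -1) {w : V}
    (hw : ∀ v, G.index o F v = 2 → v = w) {e : E} (he : e ∈ F) (hew : G.ini e ≠ w) :
    G.height o (G.ini e) < G.height o w := by
  obtain ⟨_, ⟨a, ha, rfl⟩, hmax⟩ :=
    Set.exists_max_image (G.ini '' F) (G.height o) (Set.toFinite _) ⟨_, e, he, rfl⟩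
  have htop : ∀ b ∈ F, G.height o (G.ini a) ≤ G.height o (G.ini b) → G.ini b = w := by
    intro b hb hbh
    have hdown : ∀ c ∈ F, G.ini c = G.ini b → o c = -1 := fun c hc hcb =>
      (ho c).resolve_left fun hup => by
        have hlt := hac.height_ini_lt_height_ter hup
        have hle := hmax _ ⟨G.rev c, hF.rev_mem hc, G.rev_ini c⟩
        rw [hcb] at hlt
        omega
    obtain ⟨p, hp, hpi, hpb⟩ := hF.exists_ne hb
    exact hw _ (hF.index_eq_two hb hp hpi hpb.symm (hdown b hb rfl) (hdown p hp hpi))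
  rw [← htop a ha le_rfl]
  exact lt_of_le_of_ne (hmax _ ⟨e, he, rfl⟩) fun h => hew (htop e he h.ge)

end TwoFace

section FaceCycle

variable {G : ConnGraph V E} {F : Set E}

variable (G) in
/-- The edge following `x` along the boundary of `F` (the identity off `F`). -/
noncomputable def faceSucc (F : Set E) (x : E) : E :=
  if x ∈ F then
    @Classical.epsilon E ⟨x⟩ fun z => z ∈ F ∧ G.ini z = G.ter x ∧ z ≠ G.rev x
  else x

theorem faceSucc_spec (hF : G.IsTwoFace F) {x : E} (hx : x ∈ F) :
    G.faceSucc F x ∈ F ∧ G.ini (G.faceSucc F x) = G.ter x ∧ G.faceSucc F x ≠ G.rev x := by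
  rw [faceSucc, if_pos hx]
  obtain ⟨p, hp, hpi, hpne⟩ := hF.exists_ne (hF.rev_mem hx)
  exact Classical.epsilon_spec (p := fun z => z ∈ F ∧ G.ini z = G.ter x ∧ z ≠ G.rev x)
    ⟨p, hp, by rw [hpi, G.rev_ini], hpne⟩

theorem eq_faceSucc (hF : G.IsTwoFace F) {x z : E} (hx : x ∈ F) (hz : z ∈ F)
    (hzi : G.ini z = G.ter x) (hzx : z ≠ G.rev x) : z = G.faceSucc F x := by
  obtain ⟨hs, hsi, hsx⟩ := faceSucc_spec hF hx
  have hrev := hF.rev_mem hx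
  exact (hF.eq_or_eq hrev hs hz (by rw [hsi, G.rev_ini]) (by rw [hzi, G.rev_ini])
    hsx.symm).resolve_left hzx

theorem faceSucc_rev_faceSucc (hF : G.IsTwoFace F) {x : E} (hx : x ∈ F) :
    G.faceSucc F (G.rev (G.faceSucc F x)) = G.rev x := by
  obtain ⟨hs, hsi, hsx⟩ := faceSucc_spec hF hx
  refine (eq_faceSucc hF (hF.rev_mem hs) (hF.rev_mem hx) ?_ ?_).symm
  · rw [G.rev_ini, G.rev_ter, hsi]
  · rw [G.rev_rev]; exact hsx.symm

theorem faceSucc_injective (hF : G.IsTwoFace F) : Function.Injective (G.faceSucc F) := by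
  have hoff : ∀ {x}, x ∉ F → G.faceSucc F x = x := fun hx => if_neg hx
  intro x y h
  by_cases hx : x ∈ F <;> by_cases hy : y ∈ F
  · apply G.rev_injective
    rw [← faceSucc_rev_faceSucc hF hx, h, faceSucc_rev_faceSucc hF hy]
  · exact absurd ((faceSucc_spec hF hx).1) (by rw [h, hoff hy]; exact hy)
  · exact absurd ((faceSucc_spec hF hy).1) (by rw [← h, hoff hx]; exact hx)
  · rwa [hoff hx, hoff hy] at h

theorem iterate_faceSucc_mem (hF : G.IsTwoFace F) {x : E} (hx : x ∈ F) (n : ℕ) :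
    (G.faceSucc F)^[n] x ∈ F := by
  induction n with
  | zero => exact hx
  | succ n ih => rw [Function.iterate_succ_apply']; exact (faceSucc_spec hF ih).1

theorem ter_iterate_faceSucc (hF : G.IsTwoFace F) {x : E} (hx : x ∈ F) (n : ℕ) :
    G.ter ((G.faceSucc F)^[n] x) = G.ini ((G.faceSucc F)^[n + 1] x) := by
  rw [Function.iterate_succ_apply', (faceSucc_spec hF (iterate_faceSucc_mem hF hx n)).2.1]

theorem iterate_faceSucc_rev_iterate (hF : G.IsTwoFace F) {x : E} (hx : x ∈ F) (n : ℕ) :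
    (G.faceSucc F)^[n] (G.rev ((G.faceSucc F)^[n] x)) = G.rev x := by
  induction n with
  | zero => rfl
  | succ n ih =>
    rw [Function.iterate_succ_apply, Function.iterate_succ_apply',
      faceSucc_rev_faceSucc hF (iterate_faceSucc_mem hF hx n), ih]

variable (G) in
noncomputable def faceCycle (F : Set E) (d : E) : List E :=
  (List.range (Function.minimalPeriod (G.faceSucc F) d)).map fun j => (G.faceSucc F)^[j] d

variable {d : E}

theorem minimalPeriod_faceSucc_pos [Finite E] (hF : G.IsTwoFace F) :
    0 < Function.minimalPeriod (G.faceSucc F) d :=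
  Function.minimalPeriod_pos_of_mem_periodicPts ((faceSucc_injective hF).mem_periodicPts d)

theorem iterate_mem_faceCycle [Finite E] (hF : G.IsTwoFace F) (n : ℕ) :
    (G.faceSucc F)^[n] d ∈ G.faceCycle F d := by
  rw [← Function.iterate_mod_minimalPeriod_eq]
  exact List.mem_map_of_mem (List.mem_range.2 (Nat.mod_lt _ (minimalPeriod_faceSucc_pos hF)))

theorem exists_iterate_eq_of_mem_faceCycle {z : E} (hz : z ∈ G.faceCycle F d) :
    ∃ j, (G.faceSucc F)^[j] d = z := by
  obtain ⟨j, -, hj⟩ := List.mem_map.1 hz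
  exact ⟨j, hj⟩

theorem isPath_faceCycle (hF : G.IsTwoFace F) (hd : d ∈ F) :
    G.IsPath (G.ini d) (G.ini d) (G.faceCycle F d) := by
  have key : ∀ n, G.IsPath (G.ini d) (G.ini ((G.faceSucc F)^[n] d))
      ((List.range n).map fun j => (G.faceSucc F)^[j] d) := by
    intro n
    induction n with
    | zero => rfl
    | succ n ih =>
      rw [List.range_succ, List.map_append]
      exact ih.append (by simp [ter_iterate_faceSucc hF hd])
  have h := key (Function.minimalPeriod (G.faceSucc F) d)
  rwa [Function.iterate_minimalPeriod] at h

theorem nodup_faceCycle : (G.faceCycle F d).Nodup :=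
  List.nodup_range.map_on fun _ hi _ hj h =>
    Function.iterate_injOn_Iio_minimalPeriod (List.mem_range.1 hi) (List.mem_range.1 hj) h

/-- Since reversal conjugates `faceSucc` to its inverse, an edge of the cycle whose reversal
also lies on it would give, halfway between the two, an edge fixed by reversal or an edge
followed by its own reversal. -/
theorem iterate_faceSucc_ne_rev [Finite E] (hF : G.IsTwoFace F) (hrev : ∀ e, G.rev e ≠ e)
    (hd : d ∈ F) (i j : ℕ) :
    (G.faceSucc F)^[i] d ≠ G.rev ((G.faceSucc F)^[j] d) := by
  set f := G.faceSucc F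
  set m := Function.minimalPeriod f d
  have hm : 0 < m := minimalPeriod_faceSucc_pos hF
  intro h
  -- `j + m * i` is `j` up to the period, and at least `i`, so the subtraction below is exact
  have key : ∀ s t, s + t = j + m * i → f^[i + t] d = G.rev (f^[s] d) := by
    intro s t hst
    have hper : f^[s + t] d = f^[j] d := by
      rw [hst, Function.iterate_add_apply,
        ((Function.isPeriodicPt_minimalPeriod f d).mul_const i).eq]
    rw [add_comm i, Function.iterate_add_apply, h, ← hper, add_comm s,
      Function.iterate_add_apply, iterate_faceSucc_rev_iterate hF (iterate_faceSucc_mem hF hd s)]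
  have hmi : i ≤ m * i := Nat.le_mul_of_pos_left i hm
  obtain ⟨t, ht | ht⟩ := Nat.even_or_odd' (j + m * i - i)
  · exact hrev _ (key (i + t) t (by omega)).symm
  · have h' := key (i + t + 1) t (by omega)
    rw [Function.iterate_succ_apply'] at h'
    have h'' := congrArg G.rev h'
    rw [G.rev_rev] at h''
    exact (faceSucc_spec hF (iterate_faceSucc_mem hF hd (i + t))).2.2 h''.symm

theorem rev_not_mem_faceCycle [Finite E] (hF : G.IsTwoFace F) (hrev : ∀ e, G.rev e ≠ e)
    (hd : d ∈ F) {e : E} (he : e ∈ G.faceCycle F d) : G.rev e ∉ G.faceCycle F d := by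
  intro hre
  obtain ⟨i, rfl⟩ := exists_iterate_eq_of_mem_faceCycle he
  obtain ⟨j, hj⟩ := exists_iterate_eq_of_mem_faceCycle hre
  exact iterate_faceSucc_ne_rev hF hrev hd j i hj

/-- The two edges of `F` at the start of the `j`-th edge of the cycle are that edge and the
reversal of its predecessor. -/
theorem mem_or_rev_mem_faceCycle_of_ini_eq [Finite E] (hF : G.IsTwoFace F) (hd : d ∈ F)
    {e : E} (he : e ∈ F) {j : ℕ} (hej : G.ini e = G.ini ((G.faceSucc F)^[j] d)) :
    e ∈ G.faceCycle F d ∨ G.rev e ∈ G.faceCycle F d := by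
  set f := G.faceSucc F
  set m := Function.minimalPeriod f d
  have hm : 0 < m := minimalPeriod_faceSucc_pos hF
  have hprev : f (f^[j + m - 1] d) = f^[j] d := by
    rw [← Function.iterate_succ_apply' f, show (j + m - 1).succ = j + m by omega,
      Function.iterate_add_apply, Function.iterate_minimalPeriod]
  obtain ⟨-, hpi, hpne⟩ : _ ∧ G.ini (f (f^[j + m - 1] d)) = _ ∧ f (f^[j + m - 1] d) ≠ _ :=
    faceSucc_spec hF (iterate_faceSucc_mem hF hd (j + m - 1))
  rw [hprev] at hpi hpne
  rcases hF.eq_or_eq (iterate_faceSucc_mem hF hd j)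
      (hF.rev_mem (iterate_faceSucc_mem hF hd (j + m - 1))) he
      (by rw [G.rev_ini, hpi]) hej hpne with rfl | rfl
  · exact .inl (iterate_mem_faceCycle hF j)
  · exact .inr (by rw [G.rev_rev]; exact iterate_mem_faceCycle hF _)

theorem mem_or_rev_mem_faceCycle [Finite E] (hF : G.IsTwoFace F) (hd : d ∈ F) {e : E}
    (he : e ∈ F) : e ∈ G.faceCycle F d ∨ G.rev e ∈ G.faceCycle F d := by
  set f := G.faceSucc F
  have hwalk : ∀ (l : List E) (a b : V), (∀ z ∈ l, z ∈ F) → G.IsPath a b l →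
      (∃ j, a = G.ini (f^[j] d)) → ∃ j, b = G.ini (f^[j] d) := by
    intro l
    induction l with
    | nil => rintro a b - rfl h; exact h
    | cons z l ih =>
      rintro a b hl ⟨hza, hp⟩ ⟨j, rfl⟩
      refine ih _ b (fun y hy => hl y (List.mem_cons_of_mem _ hy)) hp ?_
      rcases mem_or_rev_mem_faceCycle_of_ini_eq hF hd (hl z (by simp)) hza with h | h
      · obtain ⟨t, rfl⟩ := exists_iterate_eq_of_mem_faceCycle h
        exact ⟨t + 1, ter_iterate_faceSucc hF hd t⟩
      · obtain ⟨t, ht⟩ := exists_iterate_eq_of_mem_faceCycle h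
        exact ⟨t, by rw [ht, G.rev_ini]⟩
  obtain ⟨l, hlF, hl⟩ := hF.2.2.2.2 d hd e he
  obtain ⟨j, hj⟩ := hwalk l _ _ hlF hl ⟨0, rfl⟩
  exact mem_or_rev_mem_faceCycle_of_ini_eq hF hd he hj

theorem isFaceBoundary_faceCycle [Finite E] (hF : G.IsTwoFace F) (hrev : ∀ e, G.rev e ≠ e)
    (hd : d ∈ F) : G.IsFaceBoundary F (G.ini d) (G.faceCycle F d) := by
  refine ⟨hF, ?_, isPath_faceCycle hF hd, ?_, nodup_faceCycle,
    fun e he => rev_not_mem_faceCycle hF hrev hd he,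
    fun e he => mem_or_rev_mem_faceCycle hF hd he⟩
  · simpa [faceCycle] using (minimalPeriod_faceSucc_pos hF).ne'
  · intro e he
    obtain ⟨j, rfl⟩ := exists_iterate_eq_of_mem_faceCycle he
    exact iterate_faceSucc_mem hF hd j

theorem faceCycle_eq_cons_append [Finite E] (hF : G.IsTwoFace F) (hrev : ∀ e, G.rev e ≠ e)
    {d₁ d₂ : E} (h₁ : d₁ ∈ F) (h₂ : d₂ ∈ F) (hini : G.ini d₂ = G.ini d₁)
    (hne : d₁ ≠ d₂) (hloop : G.ini d₁ ≠ G.ter d₁) :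
    ∃ Q : List E, G.faceCycle F d₁ = d₁ :: (Q ++ [G.rev d₂]) ∧
      ∀ z ∈ Q, G.ini z ≠ G.ini d₁ ∧ G.ter z ≠ G.ini d₁ := by
  set f := G.faceSucc F
  set m := Function.minimalPeriod f d₁
  have hm : 0 < m := minimalPeriod_faceSucc_pos hF
  have hmem := iterate_faceSucc_mem hF h₁
  have hat : ∀ s, G.ini (f^[s] d₁) = G.ini d₁ → f^[s] d₁ = d₁ ∨ f^[s] d₁ = d₂ :=
    fun s hs => hF.eq_or_eq h₁ h₂ (hmem s) hini hs hne
  have hlast : f^[m - 1] d₁ = G.rev d₂ := by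
    have hter : G.ini (G.rev (f^[m - 1] d₁)) = G.ini d₁ := by
      rw [G.rev_ini, ter_iterate_faceSucc hF h₁, Nat.sub_add_cancel hm,
        Function.iterate_minimalPeriod]
    rcases hF.eq_or_eq h₁ h₂ (hF.rev_mem (hmem _)) hini hter hne with h | h
    · exact absurd h.symm (iterate_faceSucc_ne_rev hF hrev h₁ 0 (m - 1))
    · rw [← h, G.rev_rev]
  have hint : ∀ s, 0 < s → s < m → G.ini (f^[s] d₁) ≠ G.ini d₁ := by
    intro s hs0 hsm hs
    rcases hat s hs with h | h
    · exact hs0.ne' (Function.iterate_injOn_Iio_minimalPeriod hsm hm (h.trans rfl))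
    · exact iterate_faceSucc_ne_rev hF hrev h₁ s (m - 1) (by rw [h, hlast, G.rev_rev])
  have hm2 : 2 ≤ m := by
    by_contra! h
    have hper : f^[m] d₁ = d₁ := Function.iterate_minimalPeriod
    rw [show m = 1 by omega, Function.iterate_one] at hper
    have hter : G.ini (f d₁) = G.ter d₁ := (faceSucc_spec hF h₁).2.1
    rw [hper] at hter
    exact hloop hter
  refine ⟨(List.range (m - 2)).map fun t => f^[t + 1] d₁, ?_, ?_⟩
  · have hcyc : G.faceCycle F d₁ = (List.range (m - 2 + 1 + 1)).map fun j => f^[j] d₁ := by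
      rw [show m - 2 + 1 + 1 = m by omega]; rfl
    rw [hcyc, List.range_succ, List.range_succ_eq_map, show m - 2 + 1 = m - 1 by omega, ← hlast]
    simp [Function.comp_def]
  · simp only [List.mem_map, List.mem_range, forall_exists_index, and_imp]
    rintro z t ht rfl
    refine ⟨hint (t + 1) (by omega) (by omega), ?_⟩
    rw [ter_iterate_faceSucc hF h₁]
    exact hint (t + 2) (by omega) (by omega)

end FaceCycle

section SpannedFace

variable (G : ConnGraph V E) {k : ℕ} {lab : E → Fin k → ℤ}

theorem rev_ne_self (hGKM : IsUnsignedGKM G lab) (e : E) : G.rev e ≠ e := by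
  intro h
  apply hGKM.lab_ne e
  have h2 := hGKM.lab_rev e
  rw [h] at h2
  funext j
  have := congrFun h2 j
  simp only [Pi.neg_apply] at this
  simp only [Pi.zero_apply]
  omega

inductive SpannedFace (d₁ d₂ : E) : E → Prop
  | left : SpannedFace d₁ d₂ d₁
  | right : SpannedFace d₁ d₂ d₂
  | rev {x : E} : SpannedFace d₁ d₂ x → SpannedFace d₁ d₂ (G.rev x)
  | conn {x y : E} : SpannedFace d₁ d₂ x → SpannedFace d₁ d₂ y → G.ini y = G.ini x →
      SpannedFace d₁ d₂ (G.conn x y)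

variable {G} {d₁ d₂ : E}

theorem conn_ne_rev {e y : E} (hy : G.ini y = G.ini e) (hne : y ≠ e) :
    G.conn e y ≠ G.rev e := by
  rw [← G.conn_self e]
  intro h
  exact hne (by rw [← G.conn_inv e y hy, h, G.conn_inv e e rfl])

theorem SpannedFace.exists_ne (hini : G.ini d₂ = G.ini d₁) (hne : d₁ ≠ d₂) {x : E}
    (hx : G.SpannedFace d₁ d₂ x) :
    ∃ p, G.SpannedFace d₁ d₂ p ∧ G.ini p = G.ini x ∧ p ≠ x := by
  -- at the endpoint of `x`, transport a partner of `x` along `x`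
  have htransport : ∀ {x p}, G.SpannedFace d₁ d₂ x → G.SpannedFace d₁ d₂ p →
      G.ini p = G.ini x → p ≠ x →
      ∃ q, G.SpannedFace d₁ d₂ q ∧ G.ini q = G.ini (G.rev x) ∧ q ≠ G.rev x :=
    fun hx hp hpi hpx => ⟨_, .conn hx hp hpi, by rw [G.conn_ini _ _ hpi, G.rev_ini],
      conn_ne_rev hpi hpx⟩
  induction hx with
  | left => exact ⟨d₂, .right, hini, hne.symm⟩
  | right => exact ⟨d₁, .left, hini.symm, hne⟩
  | rev hx ih =>
    obtain ⟨p, hp, hpi, hpx⟩ := ih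
    exact htransport hx hp hpi hpx
  | @conn x y hx _ hxy ih _ =>
    by_cases hyx : y = x
    · subst hyx
      obtain ⟨p, hp, hpi, hpx⟩ := ih
      rw [G.conn_self]
      exact htransport hx hp hpi hpx
    · refine ⟨G.rev x, .rev hx, by rw [G.conn_ini _ _ hxy, G.rev_ini], ?_⟩
      exact (conn_ne_rev hxy hyx).symm

theorem SpannedFace.exists_isPath (hini : G.ini d₂ = G.ini d₁) {x : E}
    (hx : G.SpannedFace d₁ d₂ x) :
    ∃ l : List E, (∀ z ∈ l, G.SpannedFace d₁ d₂ z) ∧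
      G.IsPath (G.ini d₁) (G.ini x) l := by
  induction hx with
  | left => exact ⟨[], by simp, rfl⟩
  | right => exact ⟨[], by simp, hini.symm⟩
  | @rev x hx ih =>
    obtain ⟨l, hl, hp⟩ := ih
    refine ⟨l ++ [x], by simpa [or_imp, forall_and, hx] using hl, ?_⟩
    rw [G.rev_ini]
    exact hp.append (by simp)
  | @conn x y hx _ hxy ih _ =>
    obtain ⟨l, hl, hp⟩ := ih
    refine ⟨l ++ [x], by simpa [or_imp, forall_and, hx] using hl, ?_⟩
    rw [G.conn_ini _ _ hxy]
    exact hp.append (by simp)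

theorem SpannedFace.label_mem_span (hGKM : IsUnsignedGKM G lab) {x : E}
    (hx : G.SpannedFace d₁ d₂ x) :
    (fun j => (lab x j : ℚ)) ∈
      Submodule.span ℚ {fun j => (lab d₁ j : ℚ), fun j => (lab d₂ j : ℚ)} := by
  induction hx with
  | left => exact Submodule.subset_span (by simp)
  | right => exact Submodule.subset_span (by simp)
  | @rev x _ ih =>
    convert neg_mem ih using 1
    funext j
    simp [hGKM.lab_rev x]
  | @conn x y _ _ hxy ihx ihy =>
    obtain ⟨s, m, -, hsm⟩ := hGKM.congru x y hxy
    convert add_mem (Submodule.smul_mem _ (s : ℚ) ihy) (Submodule.smul_mem _ (m : ℚ) ihx)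
      using 1
    funext j
    simp [hsm]

theorem SpannedFace.eq_or_eq (hGKM : IsUnsignedGKM G lab) (h3 : IsGKM3 G lab) {x y z : E}
    (hx : G.SpannedFace d₁ d₂ x) (hy : G.SpannedFace d₁ d₂ y)
    (hz : G.SpannedFace d₁ d₂ z)
    (hyx : G.ini y = G.ini x) (hzx : G.ini z = G.ini x) (hne : x ≠ y) : z = x ∨ z = y := by
  by_contra! h
  have li := h3 x y z hyx hzx hne (Ne.symm h.1) (Ne.symm h.2)
  have hsub : Submodule.span ℚ (Set.range ![fun j => (lab x j : ℚ), fun j => (lab y j : ℚ),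
      fun j => (lab z j : ℚ)]) ≤
      Submodule.span ℚ {fun j => (lab d₁ j : ℚ), fun j => (lab d₂ j : ℚ)} := by
    rw [Submodule.span_le]
    rintro _ ⟨i, rfl⟩
    fin_cases i
    exacts [hx.label_mem_span hGKM, hy.label_mem_span hGKM, hz.label_mem_span hGKM]
  have hrank := finrank_span_eq_card li
  have hmono := Submodule.finrank_mono hsub
  have h2 := finrank_span_le_card (R := ℚ)
    ({fun j => (lab d₁ j : ℚ), fun j => (lab d₂ j : ℚ)} : Set (Fin k → ℚ))
  have hcard :=
    Finset.card_le_two (a := fun j => (lab d₁ j : ℚ)) (b := fun j => (lab d₂ j : ℚ))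
  simp only [Fintype.card_fin, Set.toFinset_insert, Set.toFinset_singleton] at hrank h2
  omega

theorem isTwoFace_spannedFace (hGKM : IsUnsignedGKM G lab) (h3 : IsGKM3 G lab)
    (hini : G.ini d₂ = G.ini d₁) (hne : d₁ ≠ d₂) :
    G.IsTwoFace {e | G.SpannedFace d₁ d₂ e} := by
  refine ⟨⟨d₁, .left⟩, fun e he => .rev he, fun e he => ?_,
    fun e he e' he' h => .conn he he' h, fun e he e' he' => ?_⟩
  · obtain ⟨p, hp, hpi, hpe⟩ := he.exists_ne hini hne
    rw [Set.ncard_eq_two]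
    refine ⟨e, p, hpe.symm, Set.ext fun z => ⟨fun ⟨hz, hzi⟩ => ?_, ?_⟩⟩
    · exact SpannedFace.eq_or_eq hGKM h3 he hp hz hpi hzi hpe.symm
    · rintro (rfl | rfl)
      exacts [⟨he, rfl⟩, ⟨hp, hpi⟩]
  · obtain ⟨l, hl, hp⟩ := he.exists_isPath hini
    obtain ⟨l', hl', hp'⟩ := he'.exists_isPath hini
    refine ⟨G.revPath l ++ l', ?_, hp.revPath.append hp'⟩
    simp only [revPath, List.mem_append, List.mem_map, List.mem_reverse]
    rintro _ (⟨z, hz, rfl⟩ | hz)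
    exacts [.rev (hl z hz), hl' _ hz]

end SpannedFace

section FacesGenerate

variable {G : ConnGraph V E} {k : ℕ} {lab : E → Fin k → ℤ} {o : E → ℤ}

theorem exists_faceBoundary_pathWeight_lt [Finite V] [Finite E] (hGKM : IsUnsignedGKM G lab)
    (h3 : IsGKM3 G lab) (ho : ∀ e, o e = 1 ∨ o e = -1) (horev : ∀ e, o (G.rev e) = -o e)
    (hac : G.IsAcyclic o) (hb4 : ∀ F, G.IsTwoFace F → ∃! v, G.index o F v = 2) {x y : E}
    (hxy : G.ini y = G.ter x) (hx : o x = 1) (hy : o y = -1) (hne : y ≠ G.rev x) :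
    ∃ F Q, G.IsFaceBoundary F (G.ter x) (y :: (Q ++ [x])) ∧
      G.pathWeight o Q < G.edgeWeight o x := by
  have hini : G.ini (G.rev x) = G.ini y := by rw [G.rev_ini, hxy]
  set F := {e | G.SpannedFace y (G.rev x) e}
  have hF : G.IsTwoFace F := isTwoFace_spannedFace hGKM h3 hini hne
  have hrev : ∀ e, G.rev e ≠ e := G.rev_ne_self hGKM
  obtain ⟨w, -, hw⟩ := hb4 F hF
  have hyw : G.ini y = w :=
    hw _ (hF.index_eq_two .left .right hini hne hy (by rw [horev, hx]))
  obtain ⟨Q, hcyc, hQ⟩ := faceCycle_eq_cons_append hF hrev .left .right hini hne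
    (hac.ini_ne_ter ho horev y)
  rw [G.rev_rev] at hcyc
  have hbdry := isFaceBoundary_faceCycle hF hrev (d := y) .left
  rw [hcyc, hxy] at hbdry
  have hmemF : ∀ e ∈ y :: (Q ++ [x]), e ∈ F := hbdry.2.2.2.1
  have hnodup : (y :: (Q ++ [x])).Nodup := hbdry.2.2.2.2.1
  refine ⟨F, Q, hbdry, lt_of_lt_of_le (G.pathWeight_lt_pow o ?_ fun z hz => ?_)
    (hxy ▸ G.pow_height_ter_le_edgeWeight o x)⟩
  · have hlen := hnodup.length_le_natCard
    simp only [List.length_cons, List.length_append] at hlen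
    omega
  · have hzF : z ∈ F := hmemF z (by simp [hz])
    obtain ⟨hzi, hzt⟩ := hQ z hz
    rw [hyw] at hzi hzt ⊢
    refine max_lt (hF.height_lt_of_ini_ne hac ho hw hzF hzi) ?_
    rw [← G.rev_ini] at hzt ⊢
    exact hF.height_lt_of_ini_ne hac ho hw (hF.rev_mem hzF) hzt

theorem homotopic_append_conjFace (A Q B : List E) (x y : E) :
    G.Homotopic (A ++ x :: y :: B)
      ((A ++ [x]) ++ (y :: (Q ++ [x])) ++ G.revPath (A ++ [x]) ++ (A ++ G.revPath Q ++ B)) := by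
  have hcancel : G.Homotopic ([x] ++ G.revPath [x] ++ (G.revPath A ++ A)) [] := by
    simpa using (G.homotopic_append_revPath [x]).append (G.homotopic_revPath_append A)
  symm
  calc (A ++ [x]) ++ (y :: (Q ++ [x])) ++ G.revPath (A ++ [x]) ++ (A ++ G.revPath Q ++ B)
      = (A ++ [x, y] ++ Q) ++ ([x] ++ G.revPath [x] ++ (G.revPath A ++ A))
          ++ (G.revPath Q ++ B) := by simp
    G.Homotopic _ ((A ++ [x, y] ++ Q) ++ [] ++ (G.revPath Q ++ B)) :=
      hcancel.append_append _ _
    _ = (A ++ [x, y]) ++ (Q ++ G.revPath Q) ++ B := by simp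
    G.Homotopic _ ((A ++ [x, y]) ++ [] ++ B) := (G.homotopic_append_revPath Q).append_append _ _
    _ = A ++ x :: y :: B := by simp

theorem exists_pathWeight_lt_of_peak [Finite V] [Finite E] (hGKM : IsUnsignedGKM G lab)
    (h3 : IsGKM3 G lab) (ho : ∀ e, o e = 1 ∨ o e = -1) (horev : ∀ e, o (G.rev e) = -o e)
    (hac : G.IsAcyclic o) (hb4 : ∀ F, G.IsTwoFace F → ∃! v, G.index o F v = 2)
    {v : V} {A B : List E} {x y : E} (hl : G.IsPath v v (A ++ x :: y :: B)) (hx : o x = 1)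
    (hy : o y = -1) :
    ∃ l', G.IsPath v v l' ∧ G.pathWeight o l' < G.pathWeight o (A ++ x :: y :: B) ∧
      (G.FaceGenerated v l' → G.FaceGenerated v (A ++ x :: y :: B)) := by
  obtain ⟨u, hA, hxu, hyx, hB⟩ : ∃ u, G.IsPath v u A ∧ G.ini x = u ∧ G.ini y = G.ter x ∧
      G.IsPath (G.ter y) v B := by simpa [isPath_append_iff] using hl
  have hwx := G.edgeWeight_pos o x
  have hwy := G.edgeWeight_pos o y
  by_cases hback : y = G.rev x
  · subst hback
    refine ⟨A ++ B, hA.append (by rwa [G.rev_ter, hxu] at hB), by simp; omega,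
      fun h => h.of_homotopic (G.homotopic_backtrack A B x)⟩
  obtain ⟨F, Q, hbdry, hQ⟩ :=
    exists_faceBoundary_pathWeight_lt hGKM h3 ho horev hac hb4 hyx hx hy hback
  obtain ⟨-, hQp⟩ : G.ini y = G.ter x ∧ G.IsPath (G.ter y) (G.ini x) Q := by
    simpa [isPath_append_iff] using hbdry.2.2.1
  refine ⟨A ++ G.revPath Q ++ B, (hA.append (hxu ▸ hQp.revPath)).append hB, by simp; omega,
    fun h => ?_⟩
  have hC : G.ConjFaceLoop v ((A ++ [x]) ++ (y :: (Q ++ [x])) ++ G.revPath (A ++ [x])) :=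
    ⟨G.ter x, A ++ [x], _, F, hA.append (by simpa using hxu), hbdry, rfl⟩
  exact (h.conjFaceLoop_append hC).of_homotopic (homotopic_append_conjFace A Q B x y)

theorem faceGenerated_of_isPath [Finite V] [Finite E] (hGKM : IsUnsignedGKM G lab)
    (h3 : IsGKM3 G lab) (ho : ∀ e, o e = 1 ∨ o e = -1) (horev : ∀ e, o (G.rev e) = -o e)
    (hac : G.IsAcyclic o) (hb4 : ∀ F, G.IsTwoFace F → ∃! v, G.index o F v = 2)
    {v : V} {l : List E} (hl : G.IsPath v v l) : G.FaceGenerated v l := by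
  induction hN : G.pathWeight o l using Nat.strong_induction_on generalizing v l with
  | _ N ih =>
  subst hN
  have ih' : ∀ {w l'}, G.IsPath w w l' → G.pathWeight o l' < G.pathWeight o l →
      G.FaceGenerated w l' :=
    fun hl' hlt => ih _ hlt hl' rfl
  rcases eq_or_ne l [] with rfl | hne
  · exact G.faceGenerated_nil v
  rcases l.exists_adjacent_pos_neg_or_eq_neg_append_pos (o · = 1) with
    ⟨A, x, y, B, rfl, hx, hy⟩ | ⟨D, U, rfl, hD, hU⟩
  · obtain ⟨l', hl', hlt, himp⟩ :=
      exists_pathWeight_lt_of_peak hGKM h3 ho horev hac hb4 hl hx ((ho y).resolve_left hy)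
    exact himp (ih' hl' hlt)
  obtain ⟨e, he, heU⟩ := hac.exists_up ho horev hne hl
  obtain ⟨y, D, rfl⟩ := List.exists_cons_of_ne_nil fun hD' : D = [] =>
    hac ⟨v, U, by simpa [hD'] using hne, by simpa [hD'] using hl, hU⟩
  obtain ⟨U, x, rfl⟩ := U.eq_nil_or_concat'.resolve_left fun hU' =>
    hD e (by simpa [hU'] using he) heU
  obtain ⟨hyv, hl⟩ : G.ini y = v ∧ G.IsPath (G.ter y) v (D ++ U ++ [x]) := by simpa using hl
  have hrot : G.IsPath (G.ter y) (G.ter y) ((D ++ U) ++ [x, y]) := by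
    simpa [isPath_append_iff, hyv, eq_comm] using hl
  obtain ⟨l', hl', hlt, himp⟩ := exists_pathWeight_lt_of_peak hGKM h3 ho horev hac hb4 hrot
    (hU x (by simp)) ((ho y).resolve_left (hD y (by simp)))
  have hgen := himp (ih' hl' (hlt.trans_eq (by simp; omega)))
  exact hyv ▸ FaceGenerated.of_rotate (by simpa using hgen)

end FacesGenerate

end ConnGraph

theorem facesGenerate_of_acyclic_orientation_general {V E : Type*} [Fintype V]
    [Fintype E] {k : ℕ}
    (G : ConnGraph V E) (lab : E → Fin k → ℤ)
    (hGKM : IsUnsignedGKM G lab) (h3 : IsGKM3 G lab)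
    (o : E → ℤ) (ho : ∀ e : E, o e = 1 ∨ o e = -1)
    (horev : ∀ e : E, o (G.rev e) = -o e)
    (hacyclic : ¬ ∃ (v : V) (l : List E),
      l ≠ [] ∧ G.IsPath v v l ∧ ∀ e ∈ l, o e = 1)
    (hb4 : ∀ F : Set E, G.IsTwoFace F →
      ∃! v : V, {e : E | e ∈ F ∧ G.ini e = v ∧ o e = -1}.ncard = 2) :
    G.FacesGeneratePi1 :=
  fun _ _ hl => ConnGraph.faceGenerated_of_isPath hGKM h3 ho horev hacyclic hb4 hl

/-- If a finite unsigned GKM₃ graph carries an acyclic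
orientation of its edges such that every 2-face has a unique vertex of index 2
(i.e. `b₄(F,o) = 1`), then the conjugated 2-faces generate the fundamental
group `π₁(Γ, v)` at any base vertex. -/
theorem facesGenerate_of_acyclic_orientation {V E : Type*} [Fintype V]
    [Fintype E] {n k : ℕ}
    (G : ConnGraph V E) (lab : E → Fin k → ℤ)
    (hGKM : IsUnsignedGKM G lab) (hval : G.NValent n) (h3 : IsGKM3 G lab)
    (o : E → ℤ) (ho : ∀ e : E, o e = 1 ∨ o e = -1)
    (horev : ∀ e : E, o (G.rev e) = -o e)
    (hacyclic : ¬ ∃ (v : V) (l : List E),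
      l ≠ [] ∧ G.IsPath v v l ∧ ∀ e ∈ l, o e = 1)
    (hb4 : ∀ F : Set E, G.IsTwoFace F →
      ∃! v : V, {e : E | e ∈ F ∧ G.ini e = v ∧ o e = -1}.ncard = 2) :
    G.FacesGeneratePi1 :=
  facesGenerate_of_acyclic_orientation_general G lab hGKM h3 o ho horev hacyclic hb4
end

section
/- Let Γ be an unsigned GKM graph with axial function α : E → ℤ^k/±1 and lift α̃ with components α̃_1,…,α̃_k ∈ L(Γ). Then Γ is effective (i.e., the ℤ-span of the image of α̃ equals ℤ^k) if and only if {α̃_1,…,α̃_k} forms a primitive set in L(Γ), i.e., the α̃_i are linearly independent and the intersection of their ℚ-span with L(Γ) equals their ℤ-span. -/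
/-!
Let `M ⊆ ℤ^k` be the span of the labels. A vector `q ∈ ℚ^k` with `⟨q, M⟩ ⊆ ℤ` gives the
integer function `e ↦ ⟨q, α̃(e)⟩`, which lies in the `ℚ`-span of the components and, by their
linear independence, in their `ℤ`-span exactly when `q` is integral. Such a function is
automatically a label function, because the relations defining `L(Γ)` are linear and the
components satisfy them. So primitivity says that the dual lattice of `M` is `ℤ^k`, which holds
iff `M = ℤ^k`: when `M` is proper, a nonzero character `ℤ^k ⧸ M → ℚ/ℤ` lifts to a non-integral
such `q`.
-/

attribute [local instance] Classical.propDecidable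

open Submodule

theorem exists_rat_dual_not_integral_of_ne_top {ι : Type*} [Fintype ι]
    {M : Submodule ℤ (ι → ℤ)} (hM : M ≠ ⊤) :
    ∃ q : ι → ℚ, (∀ x ∈ M, ∃ z : ℤ, ∑ j, q j * x j = z) ∧ ¬ ∃ t : ι → ℤ, ∀ j, q j = t j := by
  obtain ⟨x, -, hx⟩ := SetLike.exists_of_lt (lt_top_iff_ne_top.2 hM)
  obtain ⟨χ, hχ⟩ := CharacterModule.exists_character_apply_ne_zero_of_ne_zero
    (mt (Submodule.Quotient.mk_eq_zero M).1 hx)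
  let ψ : (ι → ℤ) →+ AddCircle (1 : ℚ) := χ.comp M.mkQ.toAddMonoidHom
  choose q hq using fun j => QuotientAddGroup.mk_surjective (ψ (Pi.single j 1))
  have hψ : ∀ y, ψ y = ((∑ j, q j * y j : ℚ) : AddCircle (1 : ℚ)) := by
    intro y
    conv_lhs => rw [← Finset.univ_sum_single y]
    rw [map_sum, ← QuotientAddGroup.coe_mk', map_sum]
    refine Finset.sum_congr rfl fun j _ => ?_
    rw [QuotientAddGroup.coe_mk', mul_comm, ← zsmul_eq_mul, AddCircle.coe_zsmul, hq,
      ← map_zsmul, ← Pi.single_smul', smul_eq_mul, mul_one]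
  refine ⟨q, fun y hy => ?_, ?_⟩
  · have hψy : ψ y = 0 := by
      change χ (M.mkQ y) = 0
      rw [M.mkQ_apply, (Submodule.Quotient.mk_eq_zero M).2 hy, map_zero]
    obtain ⟨n, hn⟩ := (AddCircle.coe_eq_zero_iff 1).1 ((hψ y).symm.trans hψy)
    exact ⟨n, by simpa using hn.symm⟩
  · rintro ⟨t, ht⟩
    refine hχ ((hψ x).trans ((AddCircle.coe_eq_zero_iff 1).2 ⟨∑ j, t j * x j, ?_⟩))
    simp [ht]

theorem LinearIndependent.rat_components {ι E : Type*} {lab : E → ι → ℤ}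
    (h : LinearIndependent ℤ fun j e => lab e j) :
    LinearIndependent ℚ fun j e => (lab e j : ℚ) := by
  have hcast : LinearMap.ker ((Int.castAddHom ℚ).toIntLinearMap.compLeft E) = ⊥ :=
    LinearMap.ker_eq_bot.2 fun a b hab => funext fun e => Int.cast_injective (congrFun hab e)
  exact (LinearIndependent.iff_fractionRing ℤ ℚ).1 (h.map' _ hcast)

section Components

variable {ι E : Type*} [Fintype ι]

theorem mem_span_components_iff {R : Type*} [CommSemiring R] (lab : E → ι → R) (a : E → R) :
    a ∈ span R (Set.range fun j e => lab e j) ↔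
      ∃ c : ι → R, ∀ e, ∑ j, c j * lab e j = a e := by
  simp only [mem_span_range_iff_exists_fun, funext_iff, Finset.sum_apply, Pi.smul_apply,
    smul_eq_mul]

theorem linearIndependent_components_iff {R : Type*} [CommRing R] (lab : E → ι → R) :
    LinearIndependent R (fun j e => lab e j) ↔
      ∀ c : ι → R, (∀ e, ∑ j, c j * lab e j = 0) → c = 0 := by
  simp only [Fintype.linearIndependent_iff, funext_iff, Finset.sum_apply, Pi.smul_apply,
    smul_eq_mul, Pi.zero_apply]

theorem mem_of_sum_mem_of_span_eq_top {S : Type*} [CommRing S] {lab : E → ι → ℤ}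
    (h : span ℤ (Set.range lab) = ⊤) (v : ι → S) {p : Submodule ℤ S}
    (hp : ∀ e, ∑ j, v j * lab e j ∈ p) (j : ι) : v j ∈ p := by
  let f := Fintype.linearCombination ℤ v
  have hle : span ℤ (Set.range lab) ≤ p.comap f := by
    rw [span_le]
    rintro _ ⟨e, rfl⟩
    simpa [f, Fintype.linearCombination_apply, zsmul_eq_mul, mul_comm] using hp e
  simpa [f] using hle (h ▸ mem_top : Pi.single j 1 ∈ span ℤ (Set.range lab))

theorem linearIndependent_components_of_span_eq_top {lab : E → ι → ℤ}
    (h : span ℤ (Set.range lab) = ⊤) : LinearIndependent ℤ fun j e => lab e j := by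
  refine (linearIndependent_components_iff lab).2 fun c hc => funext fun j => ?_
  simpa using mem_of_sum_mem_of_span_eq_top h c (p := ⊥) (by simpa using hc) j

theorem exists_int_eq_of_span_eq_top {lab : E → ι → ℤ} (h : span ℤ (Set.range lab) = ⊤)
    (q : ι → ℚ) (hq : ∀ e, ∃ z : ℤ, ∑ j, q j * lab e j = z) (j : ι) : ∃ z : ℤ, q j = z := by
  obtain ⟨z, hz⟩ := mem_of_sum_mem_of_span_eq_top h q
    (p := LinearMap.range (Algebra.linearMap ℤ ℚ))
    (fun e => by obtain ⟨z, hz⟩ := hq e; exact ⟨z, by simp [hz]⟩) j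
  exact ⟨z, by simpa using hz.symm⟩

theorem span_eq_top_iff_components_primitive (lab : E → ι → ℤ) :
    span ℤ (Set.range lab) = ⊤ ↔
      LinearIndependent ℤ (fun j e => lab e j) ∧
        ∀ a : E → ℤ, (fun e => (a e : ℚ)) ∈ span ℚ (Set.range fun j e => (lab e j : ℚ)) →
          a ∈ span ℤ (Set.range fun j e => lab e j) := by
  constructor
  · intro h
    refine ⟨linearIndependent_components_of_span_eq_top h, fun a ha => ?_⟩
    obtain ⟨q, hq⟩ := (mem_span_components_iff _ _).1 ha
    choose t ht using exists_int_eq_of_span_eq_top h q fun e => ⟨a e, hq e⟩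
    refine (mem_span_components_iff _ _).2 ⟨t, fun e => ?_⟩
    exact_mod_cast (by simpa [ht] using hq e : ((∑ j, t j * lab e j : ℤ) : ℚ) = a e)
  · rintro ⟨hli, hprim⟩
    by_contra hne
    obtain ⟨q, hq, hnot⟩ := exists_rat_dual_not_integral_of_ne_top hne
    choose a ha using fun e => hq (lab e) (subset_span ⟨e, rfl⟩)
    obtain ⟨t, ht⟩ := (mem_span_components_iff _ _).1
      (hprim a ((mem_span_components_iff _ _).2 ⟨q, ha⟩))
    refine hnot ⟨t, fun j => ?_⟩
    have hqt := (linearIndependent_components_iff _).1 hli.rat_components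
      (q - fun j => (t j : ℚ)) fun e => by simp [sub_mul, ha, ← ht]
    simpa [sub_eq_zero] using congrFun hqt j

theorem ConnGraph.isLabelFunction_of_mem_span_rat {V : Type*} {G : ConnGraph V E}
    {ε c : E → E → ℤ} {b : ι → E → ℤ} (hb : ∀ j, G.IsLabelFunction ε c (b j)) {a : E → ℤ}
    (ha : (fun e => (a e : ℚ)) ∈ span ℚ (Set.range fun j e => (b j e : ℚ))) :
    G.IsLabelFunction ε c a := by
  obtain ⟨q, hq⟩ := (mem_span_components_iff (fun e j => (b j e : ℚ)) _).1 ha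
  intro e e' he
  have hrel : (a (G.conn e e') : ℚ) = ε e e' * a e' + c e e' * a e := by
    simp only [← hq, hb _ e e' he, Finset.mul_sum]
    push_cast
    rw [← Finset.sum_add_distrib]
    exact Finset.sum_congr rfl fun j _ => by ring
  exact_mod_cast hrel

end Components

theorem IsCompatibleData.isLabelFunction_components {V E : Type*} {k : ℕ}
    {G : ConnGraph V E} {lab : E → Fin k → ℤ} {ε c : E → E → ℤ}
    (hdata : IsCompatibleData G lab ε c) (j : Fin k) :
    G.IsLabelFunction ε c fun e => lab e j := fun e e' he => by
  simpa using congrFun (hdata.2.2.2 e e' he) j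

theorem effective_iff_components_primitive_general {V E : Type*} {k : ℕ}
    (G : ConnGraph V E) (lab : E → Fin k → ℤ)
    (ε c : E → E → ℤ) (hdata : IsCompatibleData G lab ε c) :
    Effective lab ↔
      (LinearIndependent ℤ (fun j : Fin k => (fun e => lab e j : E → ℤ)) ∧
        ∀ a : E → ℤ, G.IsLabelFunction ε c a →
          (fun e => (a e : ℚ)) ∈ Submodule.span ℚ
            (Set.range (fun j : Fin k => (fun e => (lab e j : ℚ) : E → ℚ))) →
          a ∈ Submodule.span ℤ
            (Set.range (fun j : Fin k => (fun e => lab e j : E → ℤ)))) := by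
  refine (span_eq_top_iff_components_primitive lab).trans (and_congr_right fun _ => ?_)
  exact ⟨fun h a _ ha => h a ha, fun h a ha =>
    h a (G.isLabelFunction_of_mem_span_rat hdata.isLabelFunction_components ha) ha⟩

/-- An unsigned GKM graph is effective (the `ℤ`-span of the
image of the lift `α̃` equals `ℤ^k`) if and only if the components
`α̃_1, …, α̃_k` form a primitive set in `L(Γ)`: they are linearly independent,
and every label function lying in their `ℚ`-span lies in their `ℤ`-span. -/
theorem effective_iff_components_primitive {V E : Type*} {n k : ℕ}
    (G : ConnGraph V E) (lab : E → Fin k → ℤ)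
    (hGKM : IsUnsignedGKM G lab) (hval : G.NValent n)
    (ε c : E → E → ℤ) (hdata : IsCompatibleData G lab ε c) :
    Effective lab ↔
      (LinearIndependent ℤ (fun j : Fin k => (fun e => lab e j : E → ℤ)) ∧
        ∀ a : E → ℤ, G.IsLabelFunction ε c a →
          (fun e => (a e : ℚ)) ∈ Submodule.span ℚ
            (Set.range (fun j : Fin k => (fun e => (lab e j : ℚ) : E → ℚ))) →
          a ∈ Submodule.span ℤ
            (Set.range (fun j : Fin k => (fun e => lab e j : E → ℤ)))) :=
  effective_iff_components_primitive_general G lab ε c hdata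
end

section
/- Let (V,E) be a connected graph with connection ∇, sign function ε and invariant function c. Then the map Φ : L(Γ) → A(Γ) defined by Φ(a)_v := Σ_{e ∈ star(v)} a(e)·e is a group isomorphism from the group of label functions to the group of axial functions, with inverse given by Φ⁻¹(f)(e) := ⟨f_{i(e)}, e⟩. -/
attribute [local instance] Classical.propDecidable

/-- The group of label functions `L(Γ)` is isomorphic to the
group of axial functions `A(Γ)`, via `Φ(a)_v = Σ_{e ∈ star v} a(e)·e`, with
inverse `Φ⁻¹(f)(e) = ⟨f_{i(e)}, e⟩`. (The group structures are induced by the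
ambient pointwise addition, so the bijection below is automatically a group
isomorphism.) -/
theorem labelFunctions_equiv_axialFunctions {V E : Type*} (G : ConnGraph V E)
    (hconn : G.Connected) (ε c : E → E → ℤ)
    (hε : G.IsSignFunction ε) (hc : G.IsInvariantFunction ε c) :
    ∃ Φ : {a : E → ℤ // G.IsLabelFunction ε c a} ≃
          {f : V → E → ℤ // G.IsAxialTuple ε c f},
      (∀ a, (Φ a).1 = fun v e => if G.ini e = v then a.1 e else 0) ∧
      (∀ f, (Φ.symm f).1 = fun e => f.1 (G.ini e) e) := by
  refine ⟨{
    toFun := fun a => ⟨fun v e => if G.ini e = v then a.1 e else 0, ?_, ?_⟩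
    invFun := fun f => ⟨fun e => f.1 (G.ini e) e, ?_⟩
    left_inv := ?_
    right_inv := ?_ }, fun a => rfl, fun f => rfl⟩
  · intro v e h
    exact if_neg h
  · intro e e' h
    simp only [G.conn_ini e e' h, h, if_true, a.2 e e' h]
    ring
  · intro e e' h
    have h2 := f.2.2 e e' h
    simp only [G.conn_ini e e' h, h]
    rw [h2]
    ring
  · intro a
    ext e
    exact if_pos rfl
  · intro f
    ext v e
    by_cases h : G.ini e = v
    · subst h; exact if_pos rfl
    · show (if G.ini e = v then _ else 0) = _
      rw [if_neg h, f.2.1 v e h]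
end

section
/- Let Γ be an unsigned GKM graph and let α̃¹, α̃² be two lifts of its axial function α, with associated sign and invariant functions (ε¹,c¹) and (ε²,c²), and associated maps φ¹_e, φ²_e and axial function groups A¹(Γ), A²(Γ). Write α̃²(e) = d(e)·α̃¹(e) with d : E → {±1}. Then the maps F_v : ℤ star(v) → ℤ star(v), e ↦ d(e)·e, satisfy F_{t(e)} ∘ φ¹_e = φ²_e ∘ F_{i(e)} for every edge e, and hence the family (F_v)_{v∈V} induces a group isomorphism A¹(Γ) ≅ A²(Γ). In particular, the group of axial functions of an unsigned GKM graph does not depend on the choice of lift, up to group isomorphism. -/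
attribute [local instance] Classical.propDecidable

/-! Both lifts are odd under reversal, so `d ē = d e`. Comparing the congruence relations
`α̃(∇_e e') = ε α̃(e') + c α̃(e)` of the two lifts in the pair `α̃₁(e), α̃₁(e')`, which is linearly
independent for `e ≠ e'`, gives `ε₂(e,e') = d(∇_e e') ε₁(e,e') d(e')` and
`c₂(e,e') = d(∇_e e') c₁(e,e') d(e)`. These are exactly the relations that make rescaling by `d`
intertwine `φ¹` and `φ²`; since `d² = 1` the rescaling is an involution, hence a bijection
`A¹(Γ) → A²(Γ)`. -/

namespace ConnGraph

variable {V E : Type*} (G : ConnGraph V E)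

theorem ini_conn_rev {e e'' : E} (h : G.ini e'' = G.ter e) :
    G.ini (G.conn (G.rev e) e'') = G.ini e := by
  rw [G.conn_ini _ _ (by rw [h, G.rev_ini]), G.rev_ter]

theorem conn_conn_rev {e e'' : E} (h : G.ini e'' = G.ter e) :
    G.conn e (G.conn (G.rev e) e'') = e'' := by
  simpa only [G.rev_rev] using G.conn_inv (G.rev e) e'' (by rw [h, G.rev_ini])

/-- `(ε', c')` arises from `(ε, c)` by rescaling every edge `e` by `d e`; this is how the data of
the lift `d • α̃` is expressed through the data of `α̃`. -/
def IsSignTwist (d : E → ℤ) (ε c ε' c' : E → E → ℤ) : Prop :=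
  ∀ e e' : E, G.ini e' = G.ini e →
    ε' e e' = d (G.conn e e') * ε e e' * d e' ∧ c' e e' = d (G.conn e e') * c e e' * d e

variable {G} {d : E → ℤ} {ε c ε' c' : E → E → ℤ}

theorem IsSignTwist.symm (hd : ∀ e, d e * d e = 1) (h : G.IsSignTwist d ε c ε' c') :
    G.IsSignTwist d ε' c' ε c := by
  intro e e' he
  obtain ⟨hε, hc⟩ := h e e' he
  constructor
  · linear_combination -(d (G.conn e e') * d e' * hε) - ε e e' * d e' * d e' * hd (G.conn e e')
      - ε e e' * hd e'
  · linear_combination -(d (G.conn e e') * d e * hc) - c e e' * d e * d e * hd (G.conn e e')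
      - c e e' * hd e

theorem phi_twist (hd : ∀ e, d e * d e = 1) (h : G.IsSignTwist d ε c ε' c') (e : E)
    (x : E → ℤ) :
    (fun e'' => d e'' * G.phi ε c e x e'') = G.phi ε' c' e (fun e'' => d e'' * x e'') := by
  funext e''
  unfold phi
  split_ifs with ht
  · set a := G.conn (G.rev e) e''
    obtain ⟨hε, hc⟩ := h e a (G.ini_conn_rev ht)
    rw [G.conn_conn_rev ht] at hε hc
    rw [hε, hc]
    linear_combination -(d e'' * ε e a * x a * hd a) - d e'' * c e a * x e * hd e
  · rw [mul_zero]

theorem IsAxialTuple.twist (hd : ∀ e, d e * d e = 1) (h : G.IsSignTwist d ε c ε' c')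
    {f : V → E → ℤ} (hf : G.IsAxialTuple ε c f) :
    G.IsAxialTuple ε' c' (fun v e => d e * f v e) := by
  refine ⟨fun v e he => mul_eq_zero_of_right _ (hf.1 v e he), fun e e' he => ?_⟩
  obtain ⟨hε, hc⟩ := h e e' he
  rw [hε, hc]
  linear_combination d (G.conn e e') * hf.2 e e' he
    - d (G.conn e e') * ε e e' * f (G.ini e) e' * hd e'
    - d (G.conn e e') * c e e' * f (G.ini e) e * hd e

def axialTupleEquivOfTwist (hd : ∀ e, d e * d e = 1) (h : G.IsSignTwist d ε c ε' c') :
    {f : V → E → ℤ // G.IsAxialTuple ε c f} ≃ {f : V → E → ℤ // G.IsAxialTuple ε' c' f} where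
  toFun f := ⟨fun v e => d e * f.1 v e, f.2.twist hd h⟩
  invFun f := ⟨fun v e => d e * f.1 v e, f.2.twist hd (h.symm hd)⟩
  left_inv f := Subtype.ext <| funext₂ fun v e => by simp only [← mul_assoc, hd e, one_mul]
  right_inv f := Subtype.ext <| funext₂ fun v e => by simp only [← mul_assoc, hd e, one_mul]

end ConnGraph

section Lifts

variable {V E : Type*} {G : ConnGraph V E} {k : ℕ} {lab₁ lab₂ : E → Fin k → ℤ} {d : E → ℤ}

theorem IsUnsignedGKM.sign_rev (h₁ : IsUnsignedGKM G lab₁) (h₂ : IsUnsignedGKM G lab₂)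
    (hlift : ∀ e, lab₂ e = d e • lab₁ e) (e : E) : d (G.rev e) = d e := by
  apply smul_left_injective ℤ (h₁.lab_ne e)
  have := h₂.lab_rev e
  rwa [hlift, hlift, h₁.lab_rev, smul_neg, neg_inj] at this

theorem IsUnsignedGKM.linearIndependent_int (h : IsUnsignedGKM G lab₁) {e e' : E}
    (he : G.ini e' = G.ini e) (hne : e ≠ e') : LinearIndependent ℤ ![lab₁ e, lab₁ e'] := by
  have hcast : (fun i => algebraMap ℤ ℚ ∘ ![lab₁ e, lab₁ e'] i) =
      ![fun j => (lab₁ e j : ℚ), fun j => (lab₁ e' j : ℚ)] := by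
    ext i : 1
    fin_cases i <;> rfl
  exact (linearIndependent_algebraMap_comp_iff (S := ℚ)).mp (hcast ▸ h.indep₂ e e' he hne)

theorem IsCompatibleData.isSignTwist {ε₁ c₁ ε₂ c₂ : E → E → ℤ}
    (h₁ : IsUnsignedGKM G lab₁) (h₂ : IsUnsignedGKM G lab₂) (hd : ∀ e, d e * d e = 1)
    (hlift : ∀ e, lab₂ e = d e • lab₁ e)
    (hdata₁ : IsCompatibleData G lab₁ ε₁ c₁) (hdata₂ : IsCompatibleData G lab₂ ε₂ c₂) :
    G.IsSignTwist d ε₁ c₁ ε₂ c₂ := by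
  intro e e' he
  by_cases hee : e = e'
  · subst hee
    rw [G.conn_self, hdata₁.2.1, hdata₂.2.1, hdata₁.2.2.1, hdata₂.2.2.1,
      h₁.sign_rev h₂ hlift]
    exact ⟨by linear_combination -hd e, by linear_combination 2 * hd e⟩
  · have H := hdata₂.2.2.2 e e' he
    rw [hlift, hlift, hlift, hdata₁.2.2.2 e e' he] at H
    obtain ⟨hc, hε⟩ := (h₁.linearIndependent_int he hee).eq_of_pair
      (s := d (G.conn e e') * c₁ e e') (t := d (G.conn e e') * ε₁ e e')
      (s' := c₂ e e' * d e) (t' := ε₂ e e' * d e') (by linear_combination (norm := module) H)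
    constructor
    · linear_combination -(d e' * hε) - ε₂ e e' * hd e'
    · linear_combination -(d e * hc) - c₂ e e' * hd e

end Lifts

theorem axialGroup_independent_of_lift_general {V E : Type*} {k : ℕ}
    (G : ConnGraph V E) (lab₁ lab₂ : E → Fin k → ℤ)
    (h₁ : IsUnsignedGKM G lab₁) (h₂ : IsUnsignedGKM G lab₂)
    (d : E → ℤ) (hd : ∀ e : E, d e = 1 ∨ d e = -1)
    (hlift : ∀ e : E, lab₂ e = d e • lab₁ e)
    (ε₁ c₁ ε₂ c₂ : E → E → ℤ)
    (hdata₁ : IsCompatibleData G lab₁ ε₁ c₁)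
    (hdata₂ : IsCompatibleData G lab₂ ε₂ c₂) :
    (∀ (e : E) (x : E → ℤ),
      (fun e' => d e' * G.phi ε₁ c₁ e x e') =
        G.phi ε₂ c₂ e (fun e' => d e' * x e')) ∧
    ∃ Φ : {f : V → E → ℤ // G.IsAxialTuple ε₁ c₁ f} ≃
          {f : V → E → ℤ // G.IsAxialTuple ε₂ c₂ f},
      ∀ f, (Φ f).1 = fun v e => d e * f.1 v e := by
  have hd' : ∀ e, d e * d e = 1 := fun e => mul_self_eq_one_iff.mpr (hd e)
  have htwist := hdata₁.isSignTwist h₁ h₂ hd' hlift hdata₂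
  exact ⟨ConnGraph.phi_twist hd' htwist, ConnGraph.axialTupleEquivOfTwist hd' htwist,
    fun _ => rfl⟩

/-- For two lifts `lab₁`, `lab₂ = d • lab₁` of the axial
function of an unsigned GKM graph, with associated data `(ε₁,c₁)`, `(ε₂,c₂)`
and maps `φ¹_e`, `φ²_e`, the componentwise multiplication maps
`F_v : ℤ star(v) → ℤ star(v)`, `e ↦ d(e)·e`, intertwine `φ¹` and `φ²`, and
hence induce a group isomorphism `A¹(Γ) ≅ A²(Γ)`: the group of axial
functions is independent of the choice of lift. -/
theorem axialGroup_independent_of_lift {V E : Type*} {n k : ℕ}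
    (G : ConnGraph V E) (lab₁ lab₂ : E → Fin k → ℤ)
    (h₁ : IsUnsignedGKM G lab₁) (h₂ : IsUnsignedGKM G lab₂)
    (hval : G.NValent n)
    (d : E → ℤ) (hd : ∀ e : E, d e = 1 ∨ d e = -1)
    (hlift : ∀ e : E, lab₂ e = d e • lab₁ e)
    (ε₁ c₁ ε₂ c₂ : E → E → ℤ)
    (hdata₁ : IsCompatibleData G lab₁ ε₁ c₁)
    (hdata₂ : IsCompatibleData G lab₂ ε₂ c₂) :
    (∀ (e : E) (x : E → ℤ),
      (fun e' => d e' * G.phi ε₁ c₁ e x e') =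
        G.phi ε₂ c₂ e (fun e' => d e' * x e')) ∧
    ∃ Φ : {f : V → E → ℤ // G.IsAxialTuple ε₁ c₁ f} ≃
          {f : V → E → ℤ // G.IsAxialTuple ε₂ c₂ f},
      ∀ f, (Φ f).1 = fun v e => d e * f.1 v e :=
  axialGroup_independent_of_lift_general G lab₁ lab₂ h₁ h₂ d hd hlift ε₁ c₁ ε₂ c₂ hdata₁ hdata₂
end

section
/- Let (V,E) be a connected graph with connection ∇, sign function ε and invariant function c. Then for every edge e ∈ E one has φ_{ē} ∘ φ_e = id on ℤ star(i(e)). Consequently, setting [γ]·x := φ_γ(x) for a closed edge path γ at a vertex u defines a well-defined representation of the edge-path group π₁(Γ,u) on ℤ star(u) (the A-monodromy representation), i.e., φ_γ is invariant under insertion and deletion of backtracks in γ. -/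
attribute [local instance] Classical.propDecidable

namespace ConnGraph

variable {V E : Type*} (G : ConnGraph V E)

theorem phi_supported (ε c : E → E → ℤ) (e : E) (x : E → ℤ) :
    G.StarSupported (G.ter e) (G.phi ε c e x) := by
  intro e'' h
  simp [phi, h]

theorem phi_phi (ε c : E → E → ℤ) (hε : G.IsSignFunction ε)
    (hc : G.IsInvariantFunction ε c) (e : E) (x : E → ℤ)
    (hx : G.StarSupported (G.ini e) x) :
    G.phi ε c (G.rev e) (G.phi ε c e x) = x := by
  funext e''
  by_cases h : G.ini e'' = G.ini e
  · have hti : G.ter (G.rev e) = G.ini e := G.rev_ter e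
    have hcond : G.ini e'' = G.ter (G.rev e) := by rw [hti]; exact h
    have hrr : G.rev (G.rev e) = e := G.rev_rev e
    have h1 : G.phi ε c (G.rev e) (G.phi ε c e x) e'' =
        ε (G.rev e) (G.conn e e'') * (G.phi ε c e x) (G.conn e e'') +
          (G.phi ε c e x) (G.rev e) * c (G.rev e) (G.conn e e'') := by
      simp only [phi]
      rw [if_pos hcond, hrr]
    have hf : G.ini (G.conn e e'') = G.ter e := G.conn_ini e e'' h
    have hinv : G.conn (G.rev e) (G.conn e e'') = e'' := G.conn_inv e e'' h
    have h2 : (G.phi ε c e x) (G.conn e e'') =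
        ε e e'' * x e'' + x e * c e e'' := by
      simp only [phi]
      rw [if_pos hf, hinv]
    have hre : G.ini (G.rev e) = G.ter e := G.rev_ini e
    have hcs : G.conn (G.rev e) (G.rev e) = e := by
      rw [G.conn_self (G.rev e), hrr]
    have h3 : (G.phi ε c e x) (G.rev e) = - x e := by
      simp only [phi]
      rw [if_pos hre, hcs, (hε.2.1 e), (hc.1 e)]
      ring
    have hεr : ε (G.rev e) (G.conn e e'') = ε e e'' := hε.2.2 e e'' h
    have hcr : c e e'' = ε (G.rev e) (G.conn e e'') * c (G.rev e) (G.conn e e'') :=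
      hc.2 e e'' h
    rw [h1, h2, h3, hεr]
    rcases hε.1 e e'' h with hs | hs
    · rw [hεr, hs] at hcr
      rw [hs]
      rw [one_mul] at hcr
      rw [← hcr]
      ring
    · rw [hεr, hs] at hcr
      rw [hs]
      have : c (G.rev e) (G.conn e e'') = - c e e'' := by linarith
      rw [this]
      ring
  · have : G.phi ε c (G.rev e) (G.phi ε c e x) e'' = 0 := by
      have : G.ini e'' ≠ G.ter (G.rev e) := by rw [G.rev_ter e]; exact h
      simp [phi, this]
    rw [this, (hx e'' h)]

theorem isPath_append {u w : V} (l₁ l₂ : List E) :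
    G.IsPath u w (l₁ ++ l₂) ↔ ∃ v, G.IsPath u v l₁ ∧ G.IsPath v w l₂ := by
  induction l₁ generalizing u with
  | nil =>
    constructor
    · intro h; exact ⟨u, rfl, h⟩
    · rintro ⟨v, hv, h⟩; cases hv; exact h
  | cons e t ih =>
    constructor
    · rintro ⟨h1, h2⟩
      rcases (ih).1 h2 with ⟨v, hv1, hv2⟩
      exact ⟨v, ⟨h1, hv1⟩, hv2⟩
    · rintro ⟨v, ⟨h1, hv1⟩, hv2⟩
      exact ⟨h1, (ih).2 ⟨v, hv1, hv2⟩⟩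

theorem phiList_append (ε c : E → E → ℤ) (l₁ l₂ : List E) (x : E → ℤ) :
    G.phiList ε c (l₁ ++ l₂) x = G.phiList ε c l₂ (G.phiList ε c l₁ x) := by
  induction l₁ generalizing x with
  | nil => rfl
  | cons e t ih => simp only [List.cons_append, phiList]; exact ih _

theorem phiList_supported (ε c : E → E → ℤ) {u w : V} {l : List E}
    (hl : G.IsPath u w l) {x : E → ℤ} (hx : G.StarSupported u x) :
    G.StarSupported w (G.phiList ε c l x) := by
  induction l generalizing u x with
  | nil => cases hl; exact hx
  | cons e t ih =>
    obtain ⟨h1, h2⟩ := hl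
    exact ih h2 (G.phi_supported ε c e x)

theorem step_isPath {l m : List E} (h : G.HomotopyStep l m) {u w : V}
    (hp : G.IsPath u w l) : G.IsPath u w m := by
  obtain ⟨l₁, l₂, e⟩ := h
  rcases (G.isPath_append l₁ _).1 hp with ⟨v, hv1, hv2⟩
  obtain ⟨he, hre, h2⟩ := hv2
  rw [G.rev_ter e] at h2
  exact (G.isPath_append l₁ l₂).2 ⟨v, hv1, by rw [← he]; exact h2⟩

theorem step_phiList (ε c : E → E → ℤ) (hε : G.IsSignFunction ε)
    (hc : G.IsInvariantFunction ε c) {l m : List E} (h : G.HomotopyStep l m)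
    {u w : V} (hp : G.IsPath u w l) {x : E → ℤ} (hx : G.StarSupported u x) :
    G.phiList ε c l x = G.phiList ε c m x := by
  obtain ⟨l₁, l₂, e⟩ := h
  rcases (G.isPath_append l₁ _).1 hp with ⟨v, hv1, hv2⟩
  obtain ⟨he, _⟩ := hv2
  have hy : G.StarSupported (G.ini e) (G.phiList ε c l₁ x) := by
    rw [he]; exact G.phiList_supported ε c hv1 hx
  rw [G.phiList_append, G.phiList_append]
  show G.phiList ε c l₂ (G.phi ε c (G.rev e) (G.phi ε c e (G.phiList ε c l₁ x))) = _
  rw [G.phi_phi ε c hε hc e _ hy]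

theorem step_exists {l m : List E} (h : G.HomotopyStep l m) :
    ∃ l₁ l₂ e, l = l₁ ++ e :: G.rev e :: l₂ ∧ m = l₁ ++ l₂ := by
  obtain ⟨l₁, l₂, e⟩ := h
  exact ⟨l₁, l₂, e, rfl, rfl⟩

theorem diamond_aux_nil : ∀ {a' b b' : List E} {e e' : E},
    (e :: G.rev e :: b : List E) = a' ++ e' :: G.rev e' :: b' →
    (b = a' ++ b') ∨
      ∃ n, G.HomotopyStep b n ∧ G.HomotopyStep (a' ++ b') n := by
  intro a' b b' e e' heq
  match a' with
  | [] =>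
    simp only [List.nil_append, List.cons.injEq] at heq ⊢
    exact Or.inl heq.2.2
  | [x] =>
    simp only [List.cons_append, List.nil_append, List.cons.injEq] at heq
    obtain ⟨h1, h2, h3⟩ := heq
    subst h1; subst h2
    rw [h3, G.rev_rev]
    exact Or.inl rfl
  | x :: y :: t =>
    simp only [List.cons_append, List.cons.injEq] at heq
    obtain ⟨h1, h2, h3⟩ := heq
    refine Or.inr ⟨t ++ b', ?_, ?_⟩
    · rw [h3]; exact ConnGraph.HomotopyStep.backtrack (G := G) t b' e'
    · have hxy : x :: y :: (t ++ b') = [] ++ x :: G.rev x :: (t ++ b') := by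
        rw [← h1, h2]; rfl
      have goal := ConnGraph.HomotopyStep.backtrack (G := G) [] (t ++ b') x
      rw [← hxy] at goal
      exact goal

theorem diamond_aux : ∀ (a : List E) {b a' b' : List E} {e e' : E},
    a ++ e :: G.rev e :: b = a' ++ e' :: G.rev e' :: b' →
    (a ++ b = a' ++ b') ∨
      ∃ n, G.HomotopyStep (a ++ b) n ∧ G.HomotopyStep (a' ++ b') n := by
  intro a
  induction a with
  | nil =>
    intro b a' b' e e' heq
    exact G.diamond_aux_nil heq
  | cons x t ih =>
    intro b a' b' e e' heq
    match a' with
    | [] =>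
      rcases G.diamond_aux_nil heq.symm with h | ⟨n, h1, h2⟩
      · exact Or.inl h.symm
      · exact Or.inr ⟨n, h2, h1⟩
    | x' :: t' =>
      simp only [List.cons_append, List.cons.injEq] at heq
      obtain ⟨h1, h2⟩ := heq
      subst h1
      rcases ih h2 with h | ⟨n, hn1, hn2⟩
      · exact Or.inl (by simp [h])
      · obtain ⟨m₁, m₂, f, hm⟩ := G.step_exists hn1
        obtain ⟨k₁, k₂, g, hk⟩ := G.step_exists hn2
        refine Or.inr ⟨x :: (m₁ ++ m₂), ?_, ?_⟩
        · have h5 : (x :: t) ++ b = (x :: m₁) ++ f :: G.rev f :: m₂ := by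
            simp [hm.1]
          rw [h5]
          exact ConnGraph.HomotopyStep.backtrack (G := G) (x :: m₁) m₂ f
        · have h5 : (x :: t') ++ b' = (x :: k₁) ++ g :: G.rev g :: k₂ := by
            simp [hk.1]
          have h6 : x :: (m₁ ++ m₂) = x :: (k₁ ++ k₂) := by rw [← hm.2, hk.2]
          rw [h5, h6]
          exact ConnGraph.HomotopyStep.backtrack (G := G) (x :: k₁) k₂ g

theorem step_diamond {l m m' : List E} (h : G.HomotopyStep l m)
    (h' : G.HomotopyStep l m') :
    m = m' ∨ ∃ n, G.HomotopyStep m n ∧ G.HomotopyStep m' n := by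
  obtain ⟨l₁, l₂, e, rfl, rfl⟩ := G.step_exists h
  obtain ⟨k₁, k₂, f, hk⟩ := G.step_exists h'
  rcases G.diamond_aux l₁ hk.1 with h | ⟨n, h1, h2⟩
  · left; rw [h, hk.2]
  · right; exact ⟨n, h1, by rw [hk.2]; exact h2⟩

theorem homotopic_join {l l' : List E} (h : G.Homotopic l l') :
    ∃ m, Relation.ReflTransGen G.HomotopyStep l m ∧
      Relation.ReflTransGen G.HomotopyStep l' m := by
  have cr : ∀ a b c, G.HomotopyStep a b → G.HomotopyStep a c →
      ∃ d, Relation.ReflGen G.HomotopyStep b d ∧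
        Relation.ReflTransGen G.HomotopyStep c d := by
    intro a b c hab hac
    rcases G.step_diamond hab hac with h | ⟨n, h1, h2⟩
    · exact ⟨b, Relation.ReflGen.refl, by rw [← h]⟩
    · exact ⟨n, Relation.ReflGen.single h1, Relation.ReflTransGen.single h2⟩
  have equ := Relation.equivalence_join_reflTransGen cr
  have : Relation.Join (Relation.ReflTransGen G.HomotopyStep) l l' := by
    induction h with
    | rel a b hab => exact ⟨b, Relation.ReflTransGen.single hab, Relation.ReflTransGen.refl⟩
    | refl a => exact equ.refl a
    | symm a b _ ih => exact equ.symm ih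
    | trans a b c _ _ ih1 ih2 => exact equ.trans ih1 ih2
  exact this

theorem red_isPath {l m : List E} (h : Relation.ReflTransGen G.HomotopyStep l m)
    {u w : V} (hp : G.IsPath u w l) : G.IsPath u w m := by
  induction h with
  | refl => exact hp
  | tail _ hstep ih => exact G.step_isPath hstep ih

theorem red_phiList (ε c : E → E → ℤ) (hε : G.IsSignFunction ε)
    (hc : G.IsInvariantFunction ε c) {l m : List E}
    (h : Relation.ReflTransGen G.HomotopyStep l m) {u w : V}
    (hp : G.IsPath u w l) {x : E → ℤ} (hx : G.StarSupported u x) :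
    G.phiList ε c l x = G.phiList ε c m x := by
  induction h with
  | refl => rfl
  | tail hred hstep ih =>
    rw [ih, G.step_phiList ε c hε hc hstep (G.red_isPath hred hp) hx]

end ConnGraph

/-- On a connected graph with connection, sign function and
invariant function, `φ_{ē} ∘ φ_e = id` on `ℤ star(i e)`; consequently
`φ_γ` only depends on the homotopy class of the closed edge path `γ`, so the
A-monodromy representation of the edge-path group `π₁(Γ, u)` on `ℤ star(u)` is
well defined. -/
theorem aMonodromy_well_defined {V E : Type*} (G : ConnGraph V E)
    (hconn : G.Connected) (ε c : E → E → ℤ)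
    (hε : G.IsSignFunction ε) (hc : G.IsInvariantFunction ε c) :
    (∀ (e : E) (x : E → ℤ), G.StarSupported (G.ini e) x →
      G.phi ε c (G.rev e) (G.phi ε c e x) = x) ∧
    (∀ (u : V) (l l' : List E), G.IsPath u u l → G.IsPath u u l' →
      G.Homotopic l l' →
      ∀ x : E → ℤ, G.StarSupported u x →
        G.phiList ε c l x = G.phiList ε c l' x) := by
  constructor
  · intro e x hx
    exact G.phi_phi ε c hε hc e x hx
  · intro u l l' hl hl' hhom x hx
    obtain ⟨m, h1, h2⟩ := G.homotopic_join hhom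
    rw [G.red_phiList ε c hε hc h1 hl hx, G.red_phiList ε c hε hc h2 hl' hx]
end

section
/- Let π : Γ̃ → Γ be a covering of GKM graphs (a graph covering of the underlying graphs which preserves the axial functions, i.e. α̃(e) = α(π(e)), and intertwines the connections, i.e. ∇_{π(e)}(π(e')) = π(∇̃_e(e'))), and let D be a group of GKM graph automorphisms of Γ̃ commuting with π which acts transitively on each vertex fiber π⁻¹(w), w a vertex of Γ. Let D act on the group of axial functions A(Γ̃) by (g·f)_v := g_*(f_{g⁻¹v}), where g_* : ℤ star(g⁻¹v) → ℤ star(v) is induced by g, and let π* : A(Γ) → A(Γ̃) be the pullback, (π*f)_v := the element of ℤ star(v) corresponding to f_{π(v)} under the bijection star(v) → star(π(v)) induced by π. Then the image of π* equals the subgroup A(Γ̃)^D of D-invariant elements. -/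
attribute [local instance] Classical.propDecidable

/-- A covering of GKM graphs: a graph covering of the underlying graphs which
preserves the (unsigned) axial functions and intertwines the connections. -/
structure GKMCovering {V₁ E₁ V₂ E₂ : Type*} (G₁ : ConnGraph V₁ E₁)
    (G₂ : ConnGraph V₂ E₂) {k : ℕ}
    (lab₁ : E₁ → Fin k → ℤ) (lab₂ : E₂ → Fin k → ℤ) where
  vmap : V₁ → V₂
  emap : E₁ → E₂
  map_ini : ∀ e, G₂.ini (emap e) = vmap (G₁.ini e)
  map_ter : ∀ e, G₂.ter (emap e) = vmap (G₁.ter e)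
  map_rev : ∀ e, emap (G₁.rev e) = G₂.rev (emap e)
  map_conn : ∀ e e', G₁.ini e' = G₁.ini e →
    emap (G₁.conn e e') = G₂.conn (emap e) (emap e')
  vmap_surj : Function.Surjective vmap
  star_bij : ∀ v : V₁, Set.BijOn emap {e | G₁.ini e = v} {e | G₂.ini e = vmap v}
  map_lab : ∀ e, lab₁ e = lab₂ (emap e) ∨ lab₁ e = -(lab₂ (emap e))

/-- An automorphism of the covering graph commuting with the covering
projection (a deck transformation), preserving the graph structure and the
connection. -/
structure DeckTransform {V₁ E₁ V₂ E₂ : Type*} (G₁ : ConnGraph V₁ E₁)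
    (vmap : V₁ → V₂) (emap : E₁ → E₂) where
  dv : V₁ ≃ V₁
  de : E₁ ≃ E₁
  d_ini : ∀ e, G₁.ini (de e) = dv (G₁.ini e)
  d_ter : ∀ e, G₁.ter (de e) = dv (G₁.ter e)
  d_rev : ∀ e, de (G₁.rev e) = G₁.rev (de e)
  d_conn : ∀ e e', G₁.ini e' = G₁.ini e →
    de (G₁.conn e e') = G₁.conn (de e) (de e')
  over_v : ∀ v, vmap (dv v) = vmap v
  over_e : ∀ e, emap (de e) = emap e

/-! A `D`-invariant axial tuple on `Γ̃` takes the same value on any two lifts of an edge of `Γ`: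
`D` is transitive on the vertex fibres, and a deck transformation is determined on a star by
the image of its base vertex, since `π` is injective on stars. Hence it descends to `Γ`, and the
congruence relations descend with it because the data `(ε, c)` on `Γ̃` are pulled back from `Γ`.
Conversely, pullbacks are invariant because deck transformations commute with `π`. -/

namespace DeckTransform

variable {V₁ E₁ V₂ E₂ : Type*} {G₁ : ConnGraph V₁ E₁} {vmap : V₁ → V₂} {emap : E₁ → E₂}
  (g : DeckTransform G₁ vmap emap)

/-- The action `(g · f)_v = g_*(f_{g⁻¹ v})` of a deck transformation on tuples. -/
def act (f : V₁ → E₁ → ℤ) : V₁ → E₁ → ℤ := fun v e => f (g.dv.symm v) (g.de.symm e)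

theorem ini_symm (e : E₁) : G₁.ini (g.de.symm e) = g.dv.symm (G₁.ini e) := by
  rw [Equiv.eq_symm_apply, ← g.d_ini, Equiv.apply_symm_apply]

theorem vmap_symm (v : V₁) : vmap (g.dv.symm v) = vmap v := by
  rw [← g.over_v, Equiv.apply_symm_apply]

theorem emap_symm (e : E₁) : emap (g.de.symm e) = emap e := by
  rw [← g.over_e, Equiv.apply_symm_apply]

theorem apply_eq_of_act_eq {f : V₁ → E₁ → ℤ} (hf : g.act f = f) (v : V₁) (e : E₁) :
    f (g.dv v) (g.de e) = f v e := by
  simpa [act] using (congrFun (congrFun hf (g.dv v)) (g.de e)).symm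

end DeckTransform

namespace GKMCovering

variable {V₁ E₁ V₂ E₂ : Type*} {G₁ : ConnGraph V₁ E₁} {G₂ : ConnGraph V₂ E₂} {k : ℕ}
  {lab₁ : E₁ → Fin k → ℤ} {lab₂ : E₂ → Fin k → ℤ} (pr : GKMCovering G₁ G₂ lab₁ lab₂)

noncomputable def pullback (f : V₂ → E₂ → ℤ) : V₁ → E₁ → ℤ := fun v e =>
  if G₁.ini e = v then f (pr.vmap v) (pr.emap e) else 0

theorem exists_lift_of_ini_eq (e : E₁) {e₂ : E₂} (he₂ : G₂.ini e₂ = G₂.ini (pr.emap e)) :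
    ∃ e', G₁.ini e' = G₁.ini e ∧ pr.emap e' = e₂ :=
  (pr.star_bij (G₁.ini e)).surjOn (show G₂.ini e₂ = _ by rw [he₂, pr.map_ini])

theorem emap_surjective : Function.Surjective pr.emap := by
  intro e₂
  obtain ⟨v, hv⟩ := pr.vmap_surj (G₂.ini e₂)
  exact (pr.star_bij v).surjOn (show G₂.ini e₂ = pr.vmap v from hv.symm) |>.imp fun _ => And.right

theorem eq_of_emap_eq_of_ini_eq {e e' : E₁} (hini : G₁.ini e = G₁.ini e')
    (hmap : pr.emap e = pr.emap e') : e = e' :=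
  (pr.star_bij (G₁.ini e')).injOn hini rfl hmap

def IsLiftInvariant (f : V₁ → E₁ → ℤ) : Prop :=
  ∀ e e' : E₁, pr.emap e = pr.emap e' → f (G₁.ini e) e = f (G₁.ini e') e'

/-- Reads off the value at an arbitrary lift of each edge: meaningful for lift-invariant `f`. -/
noncomputable def descend (f : V₁ → E₁ → ℤ) : V₂ → E₂ → ℤ := fun w e₂ =>
  let e := Function.surjInv pr.emap_surjective e₂
  if G₂.ini e₂ = w then f (G₁.ini e) e else 0

variable {pr}

theorem descend_apply_emap {f : V₁ → E₁ → ℤ} (hf : pr.IsLiftInvariant f) (e : E₁) :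
    pr.descend f (pr.vmap (G₁.ini e)) (pr.emap e) = f (G₁.ini e) e := by
  rw [descend, if_pos (pr.map_ini e)]
  exact hf _ _ (Function.surjInv_eq _ _)

theorem pullback_descend {f : V₁ → E₁ → ℤ} (hsupp : ∀ v, G₁.StarSupported v (f v))
    (hf : pr.IsLiftInvariant f) : pr.pullback (pr.descend f) = f := by
  funext v e
  by_cases he : G₁.ini e = v
  · subst he
    rw [pullback, if_pos rfl, descend_apply_emap hf]
  · rw [pullback, if_neg he, hsupp v e he]

theorem isAxialTuple_descend {ε c : E₂ → E₂ → ℤ} {f : V₁ → E₁ → ℤ}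
    (hax : G₁.IsAxialTuple (fun e x => ε (pr.emap e) (pr.emap x))
      (fun e x => c (pr.emap e) (pr.emap x)) f)
    (hf : pr.IsLiftInvariant f) : G₂.IsAxialTuple ε c (pr.descend f) := by
  refine ⟨fun w e₂ hne => if_neg hne, fun e₂ e₂' hini => ?_⟩
  obtain ⟨e, rfl⟩ := pr.emap_surjective e₂
  obtain ⟨e', hini', rfl⟩ := pr.exists_lift_of_ini_eq e hini
  have hconn := pr.map_conn e e' hini'
  rw [← hconn, pr.map_ini, pr.map_ter, ← hini', descend_apply_emap hf, hini',
    descend_apply_emap hf, ← G₁.conn_ini e e' hini', descend_apply_emap hf,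
    G₁.conn_ini e e' hini']
  exact hax.2 e e' hini'

theorem isLiftInvariant_of_transitive {D : Set (DeckTransform G₁ pr.vmap pr.emap)}
    (htrans : ∀ v₁ v₂ : V₁, pr.vmap v₁ = pr.vmap v₂ → ∃ g ∈ D, g.dv v₁ = v₂)
    {f : V₁ → E₁ → ℤ} (hinv : ∀ g ∈ D, g.act f = f) : pr.IsLiftInvariant f := by
  intro e e' hmap
  obtain ⟨g, hg, hgv⟩ := htrans (G₁.ini e) (G₁.ini e') (by rw [← pr.map_ini, hmap, pr.map_ini])
  have hge : g.de e = e' :=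
    pr.eq_of_emap_eq_of_ini_eq (by rw [g.d_ini, hgv]) (by rw [g.over_e, hmap])
  rw [← g.apply_eq_of_act_eq (hinv g hg), ← g.d_ini, hge]

theorem act_pullback (g : DeckTransform G₁ pr.vmap pr.emap) (f : V₂ → E₂ → ℤ) :
    g.act (pr.pullback f) = pr.pullback f := by
  funext v e
  simp only [DeckTransform.act, pullback, g.ini_symm, g.dv.symm.injective.eq_iff,
    g.vmap_symm, g.emap_symm]

end GKMCovering

theorem pullback_image_eq_deck_invariants_general {V₁ E₁ V₂ E₂ : Type*} {k : ℕ}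
    (G₁ : ConnGraph V₁ E₁) (G₂ : ConnGraph V₂ E₂)
    (lab₁ : E₁ → Fin k → ℤ) (lab₂ : E₂ → Fin k → ℤ)
    (pr : GKMCovering G₁ G₂ lab₁ lab₂)
    (ε c : E₂ → E₂ → ℤ)
    (D : Set (DeckTransform G₁ pr.vmap pr.emap))
    (htrans : ∀ v₁ v₂ : V₁, pr.vmap v₁ = pr.vmap v₂ →
      ∃ g ∈ D, g.dv v₁ = v₂) :
    ∀ f' : V₁ → E₁ → ℤ,
      G₁.IsAxialTuple (fun e x => ε (pr.emap e) (pr.emap x))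
        (fun e x => c (pr.emap e) (pr.emap x)) f' →
      ((∀ g ∈ D, (fun v e => f' (g.dv.symm v) (g.de.symm e)) = f') ↔
        (∃ f : V₂ → E₂ → ℤ, G₂.IsAxialTuple ε c f ∧
          f' = fun v e =>
            if G₁.ini e = v then f (pr.vmap v) (pr.emap e) else 0)) := by
  intro f' hax
  constructor
  · intro hinv
    have hlift : pr.IsLiftInvariant f' := GKMCovering.isLiftInvariant_of_transitive htrans hinv
    exact ⟨pr.descend f', GKMCovering.isAxialTuple_descend hax hlift,
      (GKMCovering.pullback_descend hax.1 hlift).symm⟩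
  · rintro ⟨f, -, rfl⟩ g -
    exact GKMCovering.act_pullback g f

/-- For a covering `π : Γ̃ → Γ` of GKM graphs and a group `D`
of automorphisms of `Γ̃` commuting with `π` and acting transitively on each
vertex fiber, the image of the pullback `π* : A(Γ) → A(Γ̃)` equals the
subgroup `A(Γ̃)^D` of `D`-invariant axial functions (where the data `(ε,c)` on
`Γ̃` is the pullback of the data on `Γ`). -/
theorem pullback_image_eq_deck_invariants {V₁ E₁ V₂ E₂ : Type*} {k : ℕ}
    (G₁ : ConnGraph V₁ E₁) (G₂ : ConnGraph V₂ E₂)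
    (lab₁ : E₁ → Fin k → ℤ) (lab₂ : E₂ → Fin k → ℤ)
    (h₁ : IsUnsignedGKM G₁ lab₁) (h₂ : IsUnsignedGKM G₂ lab₂)
    (pr : GKMCovering G₁ G₂ lab₁ lab₂)
    (ε c : E₂ → E₂ → ℤ) (hdata : IsCompatibleData G₂ lab₂ ε c)
    (D : Set (DeckTransform G₁ pr.vmap pr.emap))
    (htrans : ∀ v₁ v₂ : V₁, pr.vmap v₁ = pr.vmap v₂ →
      ∃ g ∈ D, g.dv v₁ = v₂) :
    ∀ f' : V₁ → E₁ → ℤ,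
      G₁.IsAxialTuple (fun e x => ε (pr.emap e) (pr.emap x))
        (fun e x => c (pr.emap e) (pr.emap x)) f' →
      ((∀ g ∈ D, (fun v e => f' (g.dv.symm v) (g.de.symm e)) = f') ↔
        (∃ f : V₂ → E₂ → ℤ, G₂.IsAxialTuple ε c f ∧
          f' = fun v e =>
            if G₁.ini e = v then f (pr.vmap v) (pr.emap e) else 0)) :=
  pullback_image_eq_deck_invariants_general G₁ G₂ lab₁ lab₂ pr ε c D htrans
end
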